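/- arXiv:1703.10521 — 10 statements merged into one kernel-verified Lean document; each statement's English description precedes it below -/
import Mathlib

section
/- Let $F$ be a flat (filtering) covariant functor from the one-object category with endomorphism monoid $(\mathcal{O}_K,\times)$ (for $\mathcal{O}_K$ a commutative integral domain) to Sets, and let $X = F(\star)$. Then the binary operation on $X$ defined by $x + \tilde{x} := F(u+v)z$, where $z \in X$ and $u,v \in \mathcal{O}_K$ satisfy $F(u)z = x$ and $F(v)z = \tilde{x}$, is well defined, i.e., independent of the choice of $u, v, z$. -/
/-!
Two representations `(u, v, z)` and `(u', v', z')` of the pair `(x, x')` admit a common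
refinement: by flatness there are `w`, `p`, `q` with `z = F p w`, `z' = F q w`,
`u p = u' q` and `v p = v' q`. Then both candidate sums equal `F ((u + v) p) w`.
-/

section FlatAction

variable {M X : Type*} [Monoid M] (F : M → X → X)

theorem exists_mul_eq_mul_of_map_eq (hmul : ∀ a b x, F (a * b) x = F a (F b x))
    (hflat3 : ∀ (u v : M) (a : X), F u a = F v a →
      ∃ (w : M) (z : X), F w z = a ∧ u * w = v * w)
    {a b p q : M} {w z z' : X}
    (hp : F p w = z) (hq : F q w = z') (hab : F a z = F b z') :
    ∃ (c : M) (w' : X), F c w' = w ∧ a * (p * c) = b * (q * c) := by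
  have h : F (a * p) w = F (b * q) w := by rw [hmul, hmul, hp, hq, hab]
  obtain ⟨c, w', hc, habc⟩ := hflat3 _ _ _ h
  exact ⟨c, w', hc, by simpa only [mul_assoc] using habc⟩

theorem exists_common_refinement (hmul : ∀ a b x, F (a * b) x = F a (F b x))
    (hflat3 : ∀ (u v : M) (a : X), F u a = F v a →
      ∃ (w : M) (z : X), F w z = a ∧ u * w = v * w)
    (hflat2 : ∀ a b : X, ∃ (u v : M) (z : X), F u z = a ∧ F v z = b)
    {u v u' v' : M} {z z' : X} (hu : F u z = F u' z') (hv : F v z = F v' z') :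
    ∃ (p q : M) (w : X), F p w = z ∧ F q w = z' ∧ u * p = u' * q ∧ v * p = v' * q := by
  obtain ⟨s, t, w₀, hs, ht⟩ := hflat2 z z'
  obtain ⟨c, w₁, hc, hu₁⟩ := exists_mul_eq_mul_of_map_eq F hmul hflat3 hs ht hu
  have hsc : F (s * c) w₁ = z := by rw [hmul, hc, hs]
  have htc : F (t * c) w₁ = z' := by rw [hmul, hc, ht]
  obtain ⟨d, w₂, hd, hv₂⟩ := exists_mul_eq_mul_of_map_eq F hmul hflat3 hsc htc hv
  refine ⟨s * c * d, t * c * d, w₂, by rw [hmul, hd, hsc], by rw [hmul, hd, htc], ?_, hv₂⟩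
  rw [← mul_assoc, hu₁, mul_assoc]

end FlatAction

theorem stmt0_general {R : Type*} [CommRing R] {X : Type*}
    (F : R → X → X)
    (hFmul : ∀ a b x, F (a * b) x = F a (F b x))
    (hflat2 : ∀ a b : X, ∃ (u v : R) (z : X), F u z = a ∧ F v z = b)
    (hflat3 : ∀ (u v : R) (a : X), F u a = F v a →
      ∃ (w : R) (z : X), F w z = a ∧ u * w = v * w)
    (x x' : X) (u v u' v' : R) (z z' : X)
    (hu : F u z = x) (hv : F v z = x') (hu' : F u' z' = x) (hv' : F v' z' = x') :
    F (u + v) z = F (u' + v') z' := by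
  obtain ⟨p, q, w, rfl, rfl, hup, hvp⟩ := exists_common_refinement F hFmul hflat3 hflat2
    (hu.trans hu'.symm) (hv.trans hv'.symm)
  rw [← hFmul, ← hFmul, add_mul, add_mul, hup, hvp]

/-- well-definedness of the addition induced on `X = F(⋆)` by a flat
covariant functor `F` from the one-object category of the multiplicative monoid of an
integral domain `𝒪_K` to Sets. -/
theorem stmt0 {R : Type*} [CommRing R] [IsDomain R] {X : Type*}
    (F : R → X → X) (hF1 : ∀ x, F 1 x = x)
    (hFmul : ∀ a b x, F (a * b) x = F a (F b x))
    (hflat1 : Nonempty X)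
    (hflat2 : ∀ a b : X, ∃ (u v : R) (z : X), F u z = a ∧ F v z = b)
    (hflat3 : ∀ (u v : R) (a : X), F u a = F v a →
      ∃ (w : R) (z : X), F w z = a ∧ u * w = v * w)
    (x x' : X) (u v u' v' : R) (z z' : X)
    (hu : F u z = x) (hv : F v z = x') (hu' : F u' z' = x) (hv' : F v' z' = x') :
    F (u + v) z = F (u' + v') z' :=
  stmt0_general F hFmul hflat2 hflat3 x x' u v u' v' z z' hu hv hu' hv'
end

section
/- Let $F$ be a flat covariant functor from the one-object multiplicative category of a commutative integral domain $\mathcal{O}_K$ to Sets, and let $X = F(\star)$ equipped with the addition $x + \tilde{x} := F(u+v)z$ (where $F(u)z=x$, $F(v)z=\tilde{x}$). Then $(X,+)$ is an abelian group with neutral element $0_X := F(0)x$ for any $x \in X$, and the inverse of $x = F(a)z$ (with $F(0)z = 0_X$) given by $-x := F(-a)z$. -/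
/-! By the second flatness condition any two elements of `X`, and hence (using
`F (u * p) = F u ∘ F p`) any three, lie in the image of a single `z` under `F`. Since
`add (F u z) (F v z) = F (u + v) z`, each group law for `add` is then the image under
`F · z` of the same law in `R`. -/

section FlatAddition

variable {R X : Type*} (F : R → X → X) (add : X → X → X)

theorem flat_add_comm [AddCommMagma R]
    (hflat2 : ∀ a b : X, ∃ (u v : R) (z : X), F u z = a ∧ F v z = b)
    (hAdd : ∀ (u v : R) (z : X), add (F u z) (F v z) = F (u + v) z) (x y : X) :
    add x y = add y x := by
  obtain ⟨u, v, z, rfl, rfl⟩ := hflat2 x y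
  rw [hAdd, hAdd, add_comm]

theorem flat_add_assoc [Mul R] [AddSemigroup R]
    (hFmul : ∀ a b x, F (a * b) x = F a (F b x))
    (hflat2 : ∀ a b : X, ∃ (u v : R) (z : X), F u z = a ∧ F v z = b)
    (hAdd : ∀ (u v : R) (z : X), add (F u z) (F v z) = F (u + v) z) (x y w : X) :
    add (add x y) w = add x (add y w) := by
  obtain ⟨u, v, z₁, rfl, rfl⟩ := hflat2 x y
  obtain ⟨p, q, z, rfl, rfl⟩ := hflat2 z₁ w
  simp only [← hFmul, hAdd, add_assoc]

theorem zero_act_act [MulZeroClass R] (hFmul : ∀ a b x, F (a * b) x = F a (F b x))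
    (u : R) (z : X) : F 0 (F u z) = F 0 z := by
  rw [← hFmul, zero_mul]

theorem flat_zero_act_eq [MulZeroClass R] (hFmul : ∀ a b x, F (a * b) x = F a (F b x))
    (hflat2 : ∀ a b : X, ∃ (u v : R) (z : X), F u z = a ∧ F v z = b) (x y : X) :
    F 0 x = F 0 y := by
  obtain ⟨u, v, z, rfl, rfl⟩ := hflat2 x y
  rw [zero_act_act F hFmul, zero_act_act F hFmul]

theorem flat_zero_add [NonUnitalNonAssocSemiring R]
    (hFmul : ∀ a b x, F (a * b) x = F a (F b x))
    (hflat2 : ∀ a b : X, ∃ (u v : R) (z : X), F u z = a ∧ F v z = b)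
    (hAdd : ∀ (u v : R) (z : X), add (F u z) (F v z) = F (u + v) z) (x y : X) :
    add (F 0 y) x = x := by
  obtain ⟨u, v, z, rfl, rfl⟩ := hflat2 x y
  rw [zero_act_act F hFmul, hAdd, zero_add]

end FlatAddition

theorem stmt1_general {R : Type*} [CommRing R] {X : Type*}
    (F : R → X → X)
    (hFmul : ∀ a b x, F (a * b) x = F a (F b x))
    (hflat2 : ∀ a b : X, ∃ (u v : R) (z : X), F u z = a ∧ F v z = b)
    (add : X → X → X)
    (hAdd : ∀ (u v : R) (z : X), add (F u z) (F v z) = F (u + v) z) :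
    (∀ x y : X, add x y = add y x) ∧
    (∀ x y w : X, add (add x y) w = add x (add y w)) ∧
    (∀ x y : X, F 0 x = F 0 y) ∧
    (∀ x y : X, add (F 0 y) x = x) ∧
    (∀ (a : R) (z : X), add (F a z) (F (-a) z) = F 0 z) :=
  ⟨flat_add_comm F add hflat2 hAdd, flat_add_assoc F add hFmul hflat2 hAdd,
    flat_zero_act_eq F hFmul hflat2, flat_zero_add F add hFmul hflat2 hAdd,
    fun a z => by rw [hAdd, add_neg_cancel]⟩

/-- for a flat covariant functor `F` from the one-object multiplicative
category of an integral domain `𝒪_K` to Sets, the induced addition on `X = F(⋆)`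
(characterized by `F u z + F v z = F (u+v) z`) makes `X` an abelian group, with neutral
element `0_X = F 0 x` (for any `x`) and inverse of `F a z` given by `F (-a) z`. -/
theorem stmt1 {R : Type*} [CommRing R] [IsDomain R] {X : Type*}
    (F : R → X → X) (hF1 : ∀ x, F 1 x = x)
    (hFmul : ∀ a b x, F (a * b) x = F a (F b x))
    (hflat1 : Nonempty X)
    (hflat2 : ∀ a b : X, ∃ (u v : R) (z : X), F u z = a ∧ F v z = b)
    (hflat3 : ∀ (u v : R) (a : X), F u a = F v a →
      ∃ (w : R) (z : X), F w z = a ∧ u * w = v * w)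
    (add : X → X → X)
    (hAdd : ∀ (u v : R) (z : X), add (F u z) (F v z) = F (u + v) z) :
    (∀ x y : X, add x y = add y x) ∧
    (∀ x y w : X, add (add x y) w = add x (add y w)) ∧
    (∀ x y : X, F 0 x = F 0 y) ∧
    (∀ x y : X, add (F 0 y) x = x) ∧
    (∀ (a : R) (z : X), add (F a z) (F (-a) z) = F 0 z) :=
  stmt1_general F hFmul hflat2 add hAdd
end

section
/- Let $K$ be the fraction field of a principal ideal domain $\mathcal{O}_K$, and let $F$ be a flat covariant functor from the one-object multiplicative category of $\mathcal{O}_K$ to Sets. Then the $\mathcal{O}_K$-module $X = F(\star)$ is isomorphic to an $\mathcal{O}_K$-submodule of $K$. Concretely, if $X \neq \{0_X\}$ then for any $x \in X \setminus \{0_X\}$ the map $j_{X,x}: X \to K$ sending $\tilde{x}$ to $\tilde{k}/k$, where $x = F(k)z$ and $\tilde{x} = F(\tilde{k})z$ for some $z \in X$, is a well-defined injective $\mathcal{O}_K$-linear map. -/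
/-!
Flatness lets us write any two elements of `X` as `F k z` and `F k' z` over a common `z`, and the
equalizer condition shows that two such representations of the same pair differ only by common
factors, so the cross ratio `k' / k` does not depend on the choice. Since `x ≠ 0`, every `k` with
`F k z = x` is nonzero, so `k' / k` is a genuine element of `K`. Injectivity and linearity follow
by representing all elements involved over a single common source.
-/

/-- `exists_pair` and `exists_equalizer` are the second and third filtering conditions of flatness. -/
structure IsFiltering {R X : Type*} [Mul R] (F : R → X → X) : Prop where
  apply_mul : ∀ a b x, F (a * b) x = F a (F b x)
  exists_pair : ∀ a b : X, ∃ (u v : R) (z : X), F u z = a ∧ F v z = b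
  exists_equalizer : ∀ (u v : R) (a : X), F u a = F v a →
    ∃ (w : R) (z : X), F w z = a ∧ u * w = v * w

namespace IsFiltering

variable {R X : Type*} [CommRing R] {F : R → X → X}

theorem apply_zero_eq (hF : IsFiltering F) (a b : X) : F 0 a = F 0 b := by
  obtain ⟨u, v, z, rfl, rfl⟩ := hF.exists_pair a b
  rw [← hF.apply_mul, ← hF.apply_mul, zero_mul, zero_mul]

theorem ne_zero_of_apply_eq (hF : IsFiltering F) {x z : X} {k : R} (hx : x ≠ F 0 x)
    (hk : F k z = x) : k ≠ 0 := by
  rintro rfl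
  exact hx (hk.symm.trans (hF.apply_zero_eq z x))

theorem exists_common_source (hF : IsFiltering F) {k l : R} {z t : X} (h : F k z = F l t) :
    ∃ (m n : R) (s : X), F m s = z ∧ F n s = t ∧ k * m = l * n := by
  obtain ⟨p, q, s, hp, hq⟩ := hF.exists_pair z t
  have hkl : F (k * p) s = F (l * q) s := by rw [hF.apply_mul, hF.apply_mul, hp, hq, h]
  obtain ⟨w, s', hw, hkpw⟩ := hF.exists_equalizer _ _ _ hkl
  refine ⟨p * w, q * w, s', ?_, ?_, ?_⟩
  · rw [hF.apply_mul, hw, hp]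
  · rw [hF.apply_mul, hw, hq]
  · rw [← mul_assoc, hkpw, mul_assoc]

theorem mul_eq_mul_of_apply_eq [IsDomain R] (hF : IsFiltering F) {x x' z t : X} {k k' l l' : R}
    (hx : x ≠ F 0 x) (hk : F k z = x) (hk' : F k' z = x') (hl : F l t = x)
    (hl' : F l' t = x') : k' * l = l' * k := by
  obtain ⟨m, n, s, hm, hn, hkl⟩ := hF.exists_common_source (hk.trans hl.symm)
  have hk'l' : F (k' * m) s = F (l' * n) s := by rw [hF.apply_mul, hF.apply_mul, hm, hn, hk', hl']
  obtain ⟨w, s', hw, hk'l'w⟩ := hF.exists_equalizer _ _ _ hk'l'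
  have hx' : F (k * m * w) s' = x := by rw [hF.apply_mul, hF.apply_mul, hw, hm, hk]
  have hnw : n * w ≠ 0 := fun h =>
    hF.ne_zero_of_apply_eq hx hx' (by linear_combination w * hkl + l * h)
  apply mul_right_cancel₀ hnw
  linear_combination (-k' * w) * hkl + k * hk'l'w

variable {K : Type*} [Field K] [Algebra R K] {x : X}

theorem algebraMap_ne_zero [FaithfulSMul R K] (hF : IsFiltering F) (hx : x ≠ F 0 x) {k : R}
    {z : X} (hk : F k z = x) : algebraMap R K k ≠ 0 :=
  (map_ne_zero_iff _ (FaithfulSMul.algebraMap_injective R K)).mpr (hF.ne_zero_of_apply_eq hx hk)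

theorem exists_ratio [IsDomain R] [FaithfulSMul R K] (hF : IsFiltering F) (hx : x ≠ F 0 x) :
    ∃ j : X → K, ∀ (x' : X) (k k' : R) (z : X), F k z = x → F k' z = x' →
      j x' = algebraMap R K k' / algebraMap R K k := by
  choose u v z hu hv using hF.exists_pair x
  refine ⟨fun x' => algebraMap R K (v x') / algebraMap R K (u x'), fun x' k k' t hk hk' => ?_⟩
  rw [div_eq_div_iff (hF.algebraMap_ne_zero hx (hu x')) (hF.algebraMap_ne_zero hx hk),
    ← map_mul, ← map_mul, hF.mul_eq_mul_of_apply_eq hx (hu x') (hv x') hk hk']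

theorem injective_of_ratio [IsDomain R] [FaithfulSMul R K]
    (hF : IsFiltering F) (hx : x ≠ F 0 x) {j : X → K}
    (hj : ∀ (x' : X) (k k' : R) (z : X), F k z = x → F k' z = x' →
      j x' = algebraMap R K k' / algebraMap R K k) :
    Function.Injective j := by
  intro a b hab
  obtain ⟨u, v, z, hu, hv⟩ := hF.exists_pair x a
  obtain ⟨u', v', z', hu', hv'⟩ := hF.exists_pair x b
  obtain ⟨m, n, s, hm, hn, hmn⟩ := hF.exists_common_source (hu.trans hu'.symm)
  rw [hj a u v z hu hv, hj b u' v' z' hu' hv', div_eq_div_iff (hF.algebraMap_ne_zero hx hu)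
    (hF.algebraMap_ne_zero hx hu'), ← map_mul, ← map_mul] at hab
  have hcross : v * u' = v' * u := FaithfulSMul.algebraMap_injective R K hab
  have hvm : v * m = v' * n := mul_left_cancel₀ (hF.ne_zero_of_apply_eq hx hu)
    (by linear_combination v * hmn + n * hcross)
  calc a = F (v * m) s := by rw [hF.apply_mul, hm, hv]
    _ = F (v' * n) s := by rw [hvm]
    _ = b := by rw [hF.apply_mul, hn, hv']

theorem ratio_add_smul (hF : IsFiltering F) {j : X → K}
    (hj : ∀ (x' : X) (k k' : R) (z : X), F k z = x → F k' z = x' →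
      j x' = algebraMap R K k' / algebraMap R K k) {add : X → X → X}
    (hAdd : ∀ (u v : R) (z : X), add (F u z) (F v z) = F (u + v) z) {smul : R → X → X}
    (hSmul : ∀ (α u : R) (z : X), smul α (F u z) = F (α * u) z) (lam : R) (a b : X) :
    j (add (smul lam a) b) = algebraMap R K lam * j a + j b := by
  obtain ⟨u, v, z, hu, hv⟩ := hF.exists_pair x a
  obtain ⟨p, q, t, hp, hq⟩ := hF.exists_pair z b
  have hxt : F (u * p) t = x := by rw [hF.apply_mul, hp, hu]
  have hat : F (v * p) t = a := by rw [hF.apply_mul, hp, hv]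
  have hsum : F (lam * (v * p) + q) t = add (smul lam a) b := by rw [← hAdd, ← hSmul, hat, hq]
  rw [hj _ _ _ t hxt hsum, hj a _ _ t hxt hat, hj b _ _ t hxt hq, map_add, map_mul, add_div,
    mul_div_assoc]

end IsFiltering

theorem stmt3_general {R : Type*} [CommRing R] [IsDomain R] {X : Type*}
    (F : R → X → X)
    (hFmul : ∀ a b x, F (a * b) x = F a (F b x))
    (hflat2 : ∀ a b : X, ∃ (u v : R) (z : X), F u z = a ∧ F v z = b)
    (hflat3 : ∀ (u v : R) (a : X), F u a = F v a →
      ∃ (w : R) (z : X), F w z = a ∧ u * w = v * w)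
    (add : X → X → X)
    (hAdd : ∀ (u v : R) (z : X), add (F u z) (F v z) = F (u + v) z)
    (smul : R → X → X)
    (hSmul : ∀ (α u : R) (z : X), smul α (F u z) = F (α * u) z)
    (x : X) (hx : x ≠ F 0 x) :
    ∃ j : X → FractionRing R,
      (∀ (x' : X) (k k' : R) (z : X), F k z = x → F k' z = x' →
        j x' = algebraMap R (FractionRing R) k' / algebraMap R (FractionRing R) k) ∧
      Function.Injective j ∧
      (∀ (lam : R) (a b : X),
        j (add (smul lam a) b) = algebraMap R (FractionRing R) lam * j a + j b) := by
  have hF : IsFiltering F := ⟨hFmul, hflat2, hflat3⟩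
  obtain ⟨j, hj⟩ := hF.exists_ratio (K := FractionRing R) hx
  exact ⟨j, hj, hF.injective_of_ratio hx hj, hF.ratio_add_smul hj hAdd hSmul⟩

/-- for `𝒪_K` a PID with fraction field `K` and `F` a flat covariant functor
from its one-object multiplicative category to Sets, the `𝒪_K`-module `X = F(⋆)` embeds
into `K`: if `X ≠ {0_X}` then for any nonzero `x ∈ X` the map `j_{X,x}` sending
`x' = F k' z` (with `x = F k z`) to `k'/k ∈ K` is a well-defined injective
`𝒪_K`-linear map. -/
theorem stmt3 {R : Type*} [CommRing R] [IsDomain R] [IsPrincipalIdealRing R] {X : Type*}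
    (F : R → X → X) (hF1 : ∀ x, F 1 x = x)
    (hFmul : ∀ a b x, F (a * b) x = F a (F b x))
    (hflat1 : Nonempty X)
    (hflat2 : ∀ a b : X, ∃ (u v : R) (z : X), F u z = a ∧ F v z = b)
    (hflat3 : ∀ (u v : R) (a : X), F u a = F v a →
      ∃ (w : R) (z : X), F w z = a ∧ u * w = v * w)
    (add : X → X → X)
    (hAdd : ∀ (u v : R) (z : X), add (F u z) (F v z) = F (u + v) z)
    (smul : R → X → X)
    (hSmul : ∀ (α u : R) (z : X), smul α (F u z) = F (α * u) z)
    (x : X) (hx : x ≠ F 0 x) :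
    ∃ j : X → FractionRing R,
      (∀ (x' : X) (k k' : R) (z : X), F k z = x → F k' z = x' →
        j x' = algebraMap R (FractionRing R) k' / algebraMap R (FractionRing R) k) ∧
      Function.Injective j ∧
      (∀ (lam : R) (a b : X),
        j (add (smul lam a) b) = algebraMap R (FractionRing R) lam * j a + j b) :=
  stmt3_general F hFmul hflat2 hflat3 add hAdd smul hSmul x hx
end

section
/- Let $\mathcal{O}_K$ be a principal ideal domain with fraction field $K$ and let $X$ be an $\mathcal{O}_K$-submodule of $K$. Then the functor $F$ from the one-object multiplicative category of $\mathcal{O}_K$ to Sets, sending $\star$ to $X$ and $\lambda \in \mathcal{O}_K$ to multiplication by $\lambda$ on $X$, is flat: in particular, for any $x, y \in X$ there exist $u, v \in \mathcal{O}_K$ and $z \in X$ with $x = uz$ and $y = vz$. -/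
/-!
Clearing denominators identifies a finitely generated `R`-submodule of the fraction field with
an ideal of `R`, so over a PID it is cyclic. Applied to the span of `x` and `y` this produces a
generator `z`, which lies in `X` because `X` contains `x` and `y`. The equaliser condition holds
because the fraction field is torsion-free: `u • a = v • a` forces `u = v` or `a = 0`.
-/

open scoped nonZeroDivisors

theorem Submodule.FG.isPrincipal_of_isFractionRing {R K : Type*} [CommRing R] [IsDomain R]
    [IsPrincipalIdealRing R] [Field K] [Algebra R K] [IsFractionRing R K]
    {M : Submodule R K} (hM : M.FG) : M.IsPrincipal :=
  FractionalIdeal.isPrincipal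
    (⟨M, FractionalIdeal.isFractional_of_fg hM⟩ : FractionalIdeal R⁰ K)

theorem Submodule.exists_eq_smul_eq_smul_of_isFractionRing {R K : Type*} [CommRing R]
    [IsDomain R] [IsPrincipalIdealRing R] [Field K] [Algebra R K] [IsFractionRing R K]
    (X : Submodule R K) {x y : K} (hx : x ∈ X) (hy : y ∈ X) :
    ∃ (u v : R) (z : K), z ∈ X ∧ x = u • z ∧ y = v • z := by
  obtain ⟨z, hz⟩ := (fg_span (Set.toFinite {x, y})).isPrincipal_of_isFractionRing (R := R)
  have hspan : span R {x, y} ≤ X := span_le.mpr (Set.insert_subset hx (by simpa using hy))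
  have hz_mem : z ∈ X := hspan (hz ▸ mem_span_singleton_self z)
  obtain ⟨u, hu⟩ := mem_span_singleton.mp (hz ▸ subset_span (by simp) : x ∈ span R {z})
  obtain ⟨v, hv⟩ := mem_span_singleton.mp (hz ▸ subset_span (by simp) : y ∈ span R {z})
  exact ⟨u, v, z, hz_mem, hu.symm, hv.symm⟩

theorem Submodule.exists_smul_eq_of_smul_eq_smul {R M : Type*} [Ring R] [IsDomain R]
    [AddCommGroup M] [Module R M] [Module.IsTorsionFree R M] (X : Submodule R M) {u v : R} {a : M}
    (ha : a ∈ X) (h : u • a = v • a) :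
    ∃ (w : R) (z : M), z ∈ X ∧ w • z = a ∧ u * w = v * w := by
  rcases smul_eq_zero.mp (sub_smul u v a ▸ sub_eq_zero.mpr h) with huv | rfl
  · exact ⟨1, a, ha, one_smul R a, by rw [sub_eq_zero.mp huv]⟩
  · exact ⟨0, 0, X.zero_mem, smul_zero 0, by simp⟩

/-- for `𝒪_K` a PID with fraction field `K` and `X` an `𝒪_K`-submodule of
`K`, the functor sending `⋆` to `X` and `λ ∈ 𝒪_K` to multiplication by `λ` on `X` is
flat, i.e. it satisfies the three filtering conditions. -/
theorem stmt4 {R : Type*} [CommRing R] [IsDomain R] [IsPrincipalIdealRing R]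
    (X : Submodule R (FractionRing R)) :
    Nonempty X ∧
    (∀ x ∈ X, ∀ y ∈ X, ∃ (u v : R) (z : FractionRing R),
      z ∈ X ∧ x = u • z ∧ y = v • z) ∧
    (∀ (u v : R), ∀ a ∈ X, u • a = v • a →
      ∃ (w : R) (z : FractionRing R), z ∈ X ∧ w • z = a ∧ u * w = v * w) :=
  ⟨⟨0⟩, fun _ hx _ hy => X.exists_eq_smul_eq_smul_of_isFractionRing hx hy,
    fun _ _ _ ha h => X.exists_smul_eq_of_smul_eq_smul ha h⟩
end

section
/- Let $K$ be a number field and $J$ a closed $\mathcal{O}_K$-submodule (equivalently, closed ideal) of $\widetilde{\mathcal{O}_K} = \prod_{\mathfrak{p}} \mathcal{O}_{\mathfrak{p}}$. For each prime $\mathfrak{p}$, the projection $\pi_{\mathfrak{p}}(J) \subseteq \mathcal{O}_{\mathfrak{p}}$ equals the intersection $(\{0\} \times \mathcal{O}_{\mathfrak{p}}) \cap J$ and is a closed ideal $J_{\mathfrak{p}}$ of $\mathcal{O}_{\mathfrak{p}}$; moreover, $x \in J$ if and only if $\pi_{\mathfrak{p}}(x) \in J_{\mathfrak{p}}$ for all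 primes $\mathfrak{p}$. -/
/-!
`R` is dense in `∏_v 𝒪_v`: it is dense in each `𝒪_v` because `K` is dense in `K_v` and an
element of `K` that is integral at `v` is `v`-adically close to an element of `R`, and the
Chinese remainder theorem approximates finitely many places at once. By continuity of
multiplication, a closed `R`-submodule `J` of `∏_v 𝒪_v` is therefore an ideal. Multiplying by the
idempotent `Pi.single v 1` shows `π_v(J) = J ∩ 𝒪_v`, and every `x` is the limit of its finite
partial sums `∑_{v ∈ S} Pi.single v (x v)`, which lie in `J` as soon as every `x v ∈ J_v`.
-/

noncomputable section

namespace DedekindDomain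

open IsDedekindDomain

variable (R K : Type*) [CommRing R] [IsDedekindDomain R] [Field K] [Algebra R K]
  [IsFractionRing R K]

/-- The finite integral adèles `∏_v R_v` (removed from Mathlib; restored with its old meaning). -/
def FiniteIntegralAdeles : Type _ :=
  ∀ v : HeightOneSpectrum R, v.adicCompletionIntegers K

instance : CommRing (FiniteIntegralAdeles R K) :=
  inferInstanceAs (CommRing (∀ v : HeightOneSpectrum R, v.adicCompletionIntegers K))

instance : TopologicalSpace (FiniteIntegralAdeles R K) :=
  inferInstanceAs (TopologicalSpace (∀ v : HeightOneSpectrum R, v.adicCompletionIntegers K))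

instance : Inhabited (FiniteIntegralAdeles R K) :=
  inferInstanceAs (Inhabited (∀ v : HeightOneSpectrum R, v.adicCompletionIntegers K))

instance : Algebra R (FiniteIntegralAdeles R K) :=
  inferInstanceAs (Algebra R (∀ v : HeightOneSpectrum R, v.adicCompletionIntegers K))

end DedekindDomain

end

open NumberField DedekindDomain IsDedekindDomain

open Topology WithZero

section ProductOfRings

variable {ι : Type*} [DecidableEq ι] {A : ι → Type*}

theorem Ideal.single_apply_mem [∀ i, Semiring (A i)] {I : Ideal (∀ i, A i)} {x : ∀ i, A i}
    (hx : x ∈ I) (i : ι) : Pi.single i (x i) ∈ I := by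
  simpa only [← Pi.single_mul_left, one_mul] using I.mul_mem_left (Pi.single i 1) hx

theorem hasSum_single_apply [∀ i, AddCommMonoid (A i)] [∀ i, TopologicalSpace (A i)]
    (x : ∀ i, A i) : HasSum (fun i ↦ Pi.single i (x i)) x :=
  Pi.hasSum.mpr fun j ↦ by
    simpa using hasSum_single (f := fun i ↦ (Pi.single i (x i) : ∀ i, A i) j) j
      fun i hij ↦ Pi.single_eq_of_ne' hij _

theorem AddSubmonoid.mem_of_isClosed_of_forall_single_mem [∀ i, AddCommMonoid (A i)]
    [∀ i, TopologicalSpace (A i)] {S : AddSubmonoid (∀ i, A i)}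
    (hS : IsClosed (S : Set (∀ i, A i))) {x : ∀ i, A i} (hx : ∀ i, Pi.single i (x i) ∈ S) : x ∈ S :=
  hS.mem_of_tendsto (hasSum_single_apply x) (.of_forall fun _ ↦ S.sum_mem fun i _ ↦ hx i)

end ProductOfRings

theorem Submodule.mul_mem_of_isClosed_of_denseRange {R A : Type*} [CommSemiring R] [Semiring A]
    [Algebra R A] [TopologicalSpace A] [ContinuousMul A] (hR : DenseRange (algebraMap R A))
    {J : Submodule R A} (hJ : IsClosed (J : Set A)) (a : A) {x : A} (hx : x ∈ J) :
    a * x ∈ J :=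
  hR.induction_on a (hJ.preimage (continuous_mul_const x)) fun r ↦ by
    simpa only [Algebra.smul_def] using J.smul_mem r hx

namespace IsDedekindDomain.HeightOneSpectrum

variable {R K : Type*} [CommRing R] [IsDedekindDomain R] [Field K] [Algebra R K]
  [IsFractionRing R K] (v : HeightOneSpectrum R)

instance : IsTopologicalRing (v.adicCompletionIntegers K) :=
  (v.adicCompletionIntegers K).toSubring.instIsTopologicalRing

open scoped WithZeroTopology in
theorem continuous_valued_adicCompletion : Continuous (Valued.v : v.adicCompletion K → ℤᵐ⁰) :=
  Valued.continuous_valuation_of_surjective (valuedAdicCompletion_surjective K v)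

theorem valued_algebraMap_adicCompletion (r : R) :
    Valued.v (algebraMap R (v.adicCompletion K) r) = v.intValuation r := by
  rw [algebraMap_adicCompletion]
  exact (valuedAdicCompletion_eq_valuation' v _).trans (valuation_of_algebraMap v r)

theorem valued_algebraMap_adicCompletion_field (k : K) :
    Valued.v (algebraMap K (v.adicCompletion K) k) = v.valuation K k :=
  valuedAdicCompletion_eq_valuation' v k

open scoped WithZeroTopology in
theorem exists_algebraMap_sub_lt {x : v.adicCompletion K} (hx : Valued.v x ≤ 1) (γ : ℤᵐ⁰ˣ) :
    ∃ a : R, Valued.v (algebraMap R (v.adicCompletion K) a - x) < γ := by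
  have hU : IsOpen ((fun y ↦ Valued.v (y - x)) ⁻¹' Set.Iio (γ : ℤᵐ⁰) ∩
      (v.adicCompletionIntegers K : Set (v.adicCompletion K))) :=
    (((continuous_valued_adicCompletion v).comp (continuous_sub_right x)).isOpen_preimage _
      WithZeroTopology.isOpen_Iio).inter (Valued.isOpen_valuationSubring _)
  -- `k` is chosen integral at `v`, so that it can in turn be approximated by `R`.
  obtain ⟨k, hkx, hk⟩ := (denseRange_algebraMap K v).exists_mem_open hU ⟨x, by simp, hx⟩
  obtain ⟨a, ha⟩ := exists_valuation_sub_lt_of_integer v (x := k)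
    (by rwa [← valued_algebraMap_adicCompletion_field]) γ
  refine ⟨a, ?_⟩
  have hsplit : algebraMap R (v.adicCompletion K) a - x =
      algebraMap K _ (algebraMap R K a - k) + (algebraMap K _ k - x) := by
    rw [map_sub, ← IsScalarTower.algebraMap_apply]
    ring
  rw [hsplit]
  refine (Valuation.map_add _ _ _).trans_lt (max_lt ?_ hkx)
  rwa [valued_algebraMap_adicCompletion_field]

theorem exists_forall_valued_sub_le_of_mem_nhds {x : v.adicCompletionIntegers K}
    {s : Set (v.adicCompletionIntegers K)} (hs : s ∈ 𝓝 x) :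
    ∃ n : ℕ, ∀ y : v.adicCompletionIntegers K,
      Valued.v ((y : v.adicCompletion K) - x) ≤ exp (-(n : ℤ)) → y ∈ s := by
  obtain ⟨u, hu, hus⟩ := mem_nhds_subtype _ _ _ |>.mp hs
  obtain ⟨γ, hγ⟩ := Valued.mem_nhds.mp hu
  obtain ⟨n, hn⟩ := exists_exp_neg_natCast_lt
    (x := MonoidWithZeroHom.ValueGroup₀.embedding γ.1) ((map_ne_zero _).mpr γ.ne_zero)
  exact ⟨n, fun y hy ↦
    hus (hγ ((Valuation.restrict_lt_iff_lt_embedding _).mpr (hy.trans_lt hn)))⟩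

variable (K) in
theorem exists_forall_algebraMap_sub_le
    (S : Finset (HeightOneSpectrum R)) (x : ∀ w : HeightOneSpectrum R, w.adicCompletionIntegers K)
    (n : ℕ) : ∃ a : R, ∀ w ∈ S,
      Valued.v (algebraMap R (w.adicCompletion K) a - x w) ≤ exp (-(n : ℤ)) := by
  choose b hb using fun w : HeightOneSpectrum R ↦
    exists_algebraMap_sub_lt w (x w).2 (Units.mk0 (exp (-(n : ℤ))) exp_ne_zero)
  obtain ⟨a, ha⟩ := exists_forall_sub_mem_ideal (s := S) (fun w ↦ w.asIdeal) (fun _ ↦ n)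
    (fun w _ ↦ Ideal.prime_of_isPrime w.ne_bot w.isPrime)
    (fun _ _ _ _ hne heq ↦ hne (HeightOneSpectrum.ext heq)) (fun w ↦ b w)
  refine ⟨a, fun w hw ↦ ?_⟩
  have hsplit : algebraMap R (w.adicCompletion K) a - x w =
      algebraMap R _ (a - b w) + (algebraMap R _ (b w) - x w) := by
    rw [map_sub]
    ring
  rw [hsplit]
  refine (Valuation.map_add _ _ _).trans (max_le ?_ (hb w).le)
  rw [valued_algebraMap_adicCompletion]
  exact (w.intValuation_le_pow_iff_mem _ n).mpr (ha w hw)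

end IsDedekindDomain.HeightOneSpectrum

open IsDedekindDomain.HeightOneSpectrum in
theorem denseRange_algebraMap_pi_adicCompletionIntegers
    {R K : Type*} [CommRing R] [IsDedekindDomain R] [Field K] [Algebra R K] [IsFractionRing R K] :
    DenseRange (algebraMap R (∀ w : HeightOneSpectrum R, w.adicCompletionIntegers K)) := by
  classical
  intro x
  rw [mem_closure_iff_nhds]
  intro U hU
  rw [nhds_pi, Filter.mem_pi] at hU
  obtain ⟨S, hS, t, ht, htU⟩ := hU
  choose N hN using fun w ↦ exists_forall_valued_sub_le_of_mem_nhds w (ht w)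
  obtain ⟨a, ha⟩ := exists_forall_algebraMap_sub_le K hS.toFinset x (hS.toFinset.sup N)
  refine ⟨algebraMap R _ a, htU fun w hw ↦ hN w _ ?_, a, rfl⟩
  refine (ha w (hS.mem_toFinset.mpr hw)).trans (exp_le_exp.mpr ?_)
  simpa using Finset.le_sup (f := N) (hS.mem_toFinset.mpr hw)

/-- let `J` be a closed `𝒪_K`-submodule of `𝒪~_K = ∏_𝔭 𝒪_𝔭`. For each
finite place `v`, the projection `π_v(J) ⊆ 𝒪_v` coincides with the intersection
`({0} × 𝒪_v) ∩ J` (elements of `J` supported at `v`), and is a closed ideal `J_v` of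
`𝒪_v`; moreover `x ∈ J` iff `π_v(x) ∈ J_v` for all `v`. -/
theorem stmt7 {K : Type*} [Field K] [NumberField K]
    [DecidableEq (HeightOneSpectrum (𝓞 K))]
    (J : Submodule (𝓞 K) (FiniteIntegralAdeles (𝓞 K) K))
    (hJ : IsClosed (J : Set (FiniteIntegralAdeles (𝓞 K) K)))
    (Jproj : ∀ v : HeightOneSpectrum (𝓞 K), Set (v.adicCompletionIntegers K))
    (hJproj : ∀ v, Jproj v = (fun x : FiniteIntegralAdeles (𝓞 K) K => x v) '' J) :
    (∀ (v : HeightOneSpectrum (𝓞 K)) (y : v.adicCompletionIntegers K),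
      y ∈ Jproj v ↔ (Pi.single v y : FiniteIntegralAdeles (𝓞 K) K) ∈ J) ∧
    (∀ v : HeightOneSpectrum (𝓞 K), IsClosed (Jproj v)) ∧
    (∀ (v : HeightOneSpectrum (𝓞 K)), ∀ c : v.adicCompletionIntegers K,
      ∀ y ∈ Jproj v, c * y ∈ Jproj v) ∧
    (∀ (v : HeightOneSpectrum (𝓞 K)), (0 : v.adicCompletionIntegers K) ∈ Jproj v ∧
      ∀ y ∈ Jproj v, ∀ z ∈ Jproj v, y + z ∈ Jproj v) ∧
    (∀ x : FiniteIntegralAdeles (𝓞 K) K,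
      x ∈ J ↔ ∀ v : HeightOneSpectrum (𝓞 K), x v ∈ Jproj v) := by
  let I : Ideal (∀ v : HeightOneSpectrum (𝓞 K), v.adicCompletionIntegers K) :=
    { J.toAddSubmonoid with
      smul_mem' := fun a _ hx ↦ J.mul_mem_of_isClosed_of_denseRange
        denseRange_algebraMap_pi_adicCompletionIntegers hJ a hx }
  have hproj (v) (y : v.adicCompletionIntegers K) : y ∈ Jproj v ↔ Pi.single v y ∈ I := by
    rw [hJproj]
    exact ⟨fun ⟨x, hx, hxy⟩ ↦ hxy ▸ I.single_apply_mem hx v, fun h ↦ ⟨_, h, by simp⟩⟩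
  refine ⟨hproj, fun v ↦ ?_, fun v c y hy ↦ ?_, fun v ↦ ⟨?_, fun y hy z hz ↦ ?_⟩,
    fun x ↦ ⟨fun hx v ↦ ?_, fun hx ↦ ?_⟩⟩
  · rw [show Jproj v = Pi.single v ⁻¹' (I : Set (∀ v, v.adicCompletionIntegers K)) by
      ext; exact hproj v _]
    exact hJ.preimage (continuous_single v)
  · rw [hproj, Pi.single_mul]
    exact I.mul_mem_left _ ((hproj v y).mp hy)
  · rw [hproj, Pi.single_zero]
    exact I.zero_mem
  · rw [hproj, Pi.single_add]
    exact I.add_mem ((hproj v y).mp hy) ((hproj v z).mp hz)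
  · rw [hJproj]
    exact ⟨x, hx, rfl⟩
  · exact J.toAddSubmonoid.mem_of_isClosed_of_forall_single_mem hJ fun v ↦ (hproj v _).mp (hx v)
end

section
/- The set $\widetilde{\mathcal{C}_{\mathcal{O}_K}}$, consisting of $\emptyset$, $\{0\}$, and all convex polygons in $\mathbb{C} \cong \mathbb{R}^2$ with nonempty interior, center $0$, vertices in $\mathcal{O}_K$, and invariant under multiplication by every unit of $\mathcal{O}_K$, forms an idempotent semiring under the operations $(A,B) \mapsto \mathrm{Conv}(A \cup B)$ (addition, with neutral element $\emptyset$) and Minkowski sum $+$ (multiplication, with neutral element $\{0\}$). -/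
/-!
Every member of `𝒞~` is convex, and a nonempty one contains `0` (the midpoint of `x` and `-x`).
Hence `Conv(A ∪ B)` is `A` or `B` whenever one of them is `∅` or `{0}`, and otherwise is the
hull of the union of the vertex sets, still symmetric and unit-invariant because the hull
commutes with the real-linear maps `z ↦ -z` and `z ↦ u z`. The Minkowski sum of two polygons is
the hull of the sums of their vertices, and `O` is closed under addition. The semiring laws are
identities of convex hulls and of pointwise addition; distributivity is
`A + Conv(s) = Conv(A + s)` for convex `A`.
-/

open Pointwise

theorem Convex.zero_mem_of_eq_neg {𝕜 E : Type*} [Field 𝕜] [LinearOrder 𝕜] [IsStrictOrderedRing 𝕜]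
    [AddCommGroup E] [Module 𝕜 E] {s : Set E} (hs : Convex 𝕜 s) (hne : s.Nonempty)
    (hneg : s = -s) : (0 : E) ∈ s := by
  obtain ⟨x, hx⟩ := hne
  have hnx : -x ∈ s := by rw [hneg]; exact Set.neg_mem_neg.mpr hx
  have hmid := hs hx hnx (by norm_num : (0 : 𝕜) ≤ 1 / 2) (by norm_num : (0 : 𝕜) ≤ 1 / 2)
    (by norm_num)
  rwa [smul_neg, add_neg_cancel] at hmid

theorem convexHull_smul_set_of_smulCommClass {𝕜 R E : Type*} [Semiring 𝕜] [PartialOrder 𝕜]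
    [AddCommMonoid E] [Module 𝕜 E] [DistribSMul R E] [SMulCommClass R 𝕜 E] (c : R) (s : Set E) :
    convexHull 𝕜 (c • s) = c • convexHull 𝕜 s := by
  rw [← Set.image_smul, ← Set.image_smul]
  exact ((DistribSMul.toLinearMap 𝕜 E c).image_convexHull s).symm

theorem Convex.add_convexHull {E : Type*} [AddCommGroup E] [Module ℝ E] {A : Set E}
    (hA : Convex ℝ A) (s : Set E) : A + convexHull ℝ s = convexHull ℝ (A + s) := by
  rw [convexHull_add, hA.convexHull_eq]

def IsUnitSymmetricPolygon (O : Subring ℂ) (C : Set ℂ) : Prop :=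
  (∃ S : Finset ℂ, (↑S : Set ℂ) ⊆ (O : Set ℂ) ∧ C = convexHull ℝ ↑S) ∧
    (interior C).Nonempty ∧ C = -C ∧ ∀ u : Oˣ, (((u : O) : ℂ)) • C = C

namespace IsUnitSymmetricPolygon

variable {O : Subring ℂ} {A B : Set ℂ}

theorem convex (hA : IsUnitSymmetricPolygon O A) : Convex ℝ A := by
  obtain ⟨⟨S, -, rfl⟩, -⟩ := hA
  exact convex_convexHull ℝ _

theorem zero_mem (hA : IsUnitSymmetricPolygon O A) : (0 : ℂ) ∈ A :=
  hA.convex.zero_mem_of_eq_neg (hA.2.1.mono interior_subset) hA.2.2.1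

theorem convexHull_union (hA : IsUnitSymmetricPolygon O A) (hB : IsUnitSymmetricPolygon O B) :
    IsUnitSymmetricPolygon O (convexHull ℝ (A ∪ B)) := by
  obtain ⟨⟨S, hSO, hAS⟩, hintA, hnegA, huA⟩ := hA
  obtain ⟨⟨T, hTO, hBT⟩, -, hnegB, huB⟩ := hB
  refine ⟨⟨S ∪ T, ?_, ?_⟩, ?_, ?_, fun u => ?_⟩
  · rw [Finset.coe_union]
    exact Set.union_subset hSO hTO
  · rw [Finset.coe_union, hAS, hBT, convexHull_convexHull_union_left,
      convexHull_convexHull_union_right]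
  · exact hintA.mono (interior_mono (Set.subset_union_left.trans (subset_convexHull ℝ _)))
  · rw [← convexHull_neg, Set.union_neg, ← hnegA, ← hnegB]
  · rw [← convexHull_smul_set_of_smulCommClass, Set.smul_set_union, huA u, huB u]

theorem add (hA : IsUnitSymmetricPolygon O A) (hB : IsUnitSymmetricPolygon O B) :
    IsUnitSymmetricPolygon O (A + B) := by
  classical
  obtain ⟨⟨S, hSO, hAS⟩, hintA, hnegA, huA⟩ := hA
  obtain ⟨⟨T, hTO, hBT⟩, hintB, hnegB, huB⟩ := hB
  refine ⟨⟨S + T, ?_, ?_⟩, ?_, ?_, fun u => ?_⟩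
  · rw [Finset.coe_add]
    exact Set.add_subset_iff.2 fun a ha b hb => O.add_mem (hSO ha) (hTO hb)
  · rw [Finset.coe_add, convexHull_add, hAS, hBT]
  · exact (hintA.add (hintB.mono interior_subset)).mono subset_interior_add_left
  · rw [neg_add, ← hnegA, ← hnegB]
  · rw [smul_add, huA u, huB u]

end IsUnitSymmetricPolygon

def unitSymmetricPolygons (O : Subring ℂ) : Set (Set ℂ) :=
  {C | C = ∅ ∨ C = {0} ∨ IsUnitSymmetricPolygon O C}

namespace unitSymmetricPolygons

variable {O : Subring ℂ} {A B : Set ℂ}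

theorem convex_of_mem (hA : A ∈ unitSymmetricPolygons O) : Convex ℝ A := by
  rcases hA with rfl | rfl | hA
  · exact convex_empty
  · exact convex_singleton 0
  · exact hA.convex

theorem zero_mem_of_mem (hA : A ∈ unitSymmetricPolygons O) (hne : A.Nonempty) : (0 : ℂ) ∈ A := by
  rcases hA with rfl | rfl | hA
  · exact absurd hne Set.not_nonempty_empty
  · exact Set.mem_singleton 0
  · exact hA.zero_mem

theorem convexHull_union_mem (hA : A ∈ unitSymmetricPolygons O)
    (hB : B ∈ unitSymmetricPolygons O) : convexHull ℝ (A ∪ B) ∈ unitSymmetricPolygons O := by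
  have absorb : ∀ {s t : Set ℂ}, s ⊆ t → t ∈ unitSymmetricPolygons O →
      convexHull ℝ (s ∪ t) ∈ unitSymmetricPolygons O := fun hst ht => by
    rwa [Set.union_eq_self_of_subset_left hst, (convex_of_mem ht).convexHull_eq]
  rcases hA with rfl | rfl | hA'
  · exact absorb (Set.empty_subset B) hB
  · rcases B.eq_empty_or_nonempty with rfl | hBne
    · rw [Set.union_comm]
      exact absorb (Set.empty_subset _) (Or.inr (Or.inl rfl))
    · exact absorb (Set.singleton_subset_iff.2 (zero_mem_of_mem hB hBne)) hB
  · rcases hB with rfl | rfl | hB'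
    · rw [Set.union_comm]
      exact absorb (Set.empty_subset A) (Or.inr (Or.inr hA'))
    · rw [Set.union_comm]
      exact absorb (Set.singleton_subset_iff.2 hA'.zero_mem) (Or.inr (Or.inr hA'))
    · exact Or.inr (Or.inr (hA'.convexHull_union hB'))

theorem add_mem (hA : A ∈ unitSymmetricPolygons O) (hB : B ∈ unitSymmetricPolygons O) :
    A + B ∈ unitSymmetricPolygons O := by
  rcases hA with rfl | rfl | hA
  · rw [Set.empty_add]
    exact Or.inl rfl
  · rwa [Set.singleton_zero, zero_add]
  · rcases hB with rfl | rfl | hB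
    · rw [Set.add_empty]
      exact Or.inl rfl
    · rw [Set.singleton_zero, add_zero]
      exact Or.inr (Or.inr hA)
    · exact Or.inr (Or.inr (hA.add hB))

end unitSymmetricPolygons

open unitSymmetricPolygons in
/-- for `𝒪_K` the ring of integers of an imaginary quadratic field (viewed
as a subring of `ℂ`), the collection `𝒞~` of `∅`, `{0}` and convex polygons with
nonempty interior, center `0`, vertices in `𝒪_K`, invariant under multiplication by the
units of `𝒪_K`, is an idempotent semiring under `(A,B) ↦ Conv(A ∪ B)` (with neutral
element `∅`) and Minkowski sum (with neutral element `{0}`). -/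
theorem stmt9 (O : Subring ℂ) (CT : Set (Set ℂ))
    (hCT : CT = {C : Set ℂ | C = ∅ ∨ C = {0} ∨
      ((∃ S : Finset ℂ, (↑S : Set ℂ) ⊆ (O : Set ℂ) ∧ C = convexHull ℝ ↑S) ∧
        (interior C).Nonempty ∧ C = -C ∧
        ∀ u : Oˣ, (((u : O) : ℂ)) • C = C)}) :
    -- closure under the two laws
    (∀ A ∈ CT, ∀ B ∈ CT, convexHull ℝ (A ∪ B) ∈ CT) ∧
    (∀ A ∈ CT, ∀ B ∈ CT, A + B ∈ CT) ∧
    -- `Conv(• ∪ •)` is commutative, associative, idempotent, with neutral element `∅`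
    (∀ A B : Set ℂ, convexHull ℝ (A ∪ B) = convexHull ℝ (B ∪ A)) ∧
    (∀ A ∈ CT, ∀ B ∈ CT, ∀ C ∈ CT,
      convexHull ℝ (convexHull ℝ (A ∪ B) ∪ C) = convexHull ℝ (A ∪ convexHull ℝ (B ∪ C))) ∧
    (∀ A ∈ CT, convexHull ℝ (A ∪ A) = A) ∧
    (∀ A ∈ CT, convexHull ℝ (A ∪ (∅ : Set ℂ)) = A) ∧
    -- Minkowski sum is commutative, associative, with neutral element `{0}`,
    -- `∅` being absorbing, and distributes over `Conv(• ∪ •)`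
    (∀ A B : Set ℂ, A + B = B + A) ∧
    (∀ A B C : Set ℂ, (A + B) + C = A + (B + C)) ∧
    (∀ A : Set ℂ, A + ({0} : Set ℂ) = A) ∧
    (∀ A : Set ℂ, A + (∅ : Set ℂ) = ∅) ∧
    (∀ A ∈ CT, ∀ B ∈ CT, ∀ C ∈ CT,
      A + convexHull ℝ (B ∪ C) = convexHull ℝ ((A + B) ∪ (A + C))) := by
  obtain rfl : CT = unitSymmetricPolygons O := hCT
  refine ⟨fun A hA B hB => convexHull_union_mem hA hB, fun A hA B hB => add_mem hA hB,
    fun A B => by rw [Set.union_comm], fun A _ B _ C _ => ?_, fun A hA => ?_, fun A hA => ?_,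
    add_comm, add_assoc, fun A => by rw [Set.singleton_zero, add_zero], fun _ => Set.add_empty,
    fun A hA B _ C _ => by rw [(convex_of_mem hA).add_convexHull, Set.add_union]⟩
  · rw [convexHull_convexHull_union_left, convexHull_convexHull_union_right, Set.union_assoc]
  · rw [Set.union_self, (convex_of_mem hA).convexHull_eq]
  · rw [Set.union_empty, (convex_of_mem hA).convexHull_eq]
end

section
/- For $K = \mathbb{Q}(\imath)$ or $K = \mathbb{Q}(\imath\sqrt{3})$, let $D_K$ be the convex polygon whose vertices are the units $\mathcal{U}_K$ of $\mathcal{O}_K$. Then every nonempty, nonzero element $C$ of $\widetilde{\mathcal{C}_{\mathcal{O}_K}}$ satisfies $C = \mathrm{Conv}\big(\bigcup_{s \in \mathcal{S}_{+,C}} s \cdot D_K\big)$, where $\mathcal{S}_{+,C}$ is the set of vertices of $C$ with argument in $[0, \theta_K)$ and $\theta_K = \pi/2$ resp. $\pi/3$; consequently $\widetilde{\mathcal{C}_{\mathcal{O}_K}}$ equals the semiring generated by $\{h \cdot D_K : h \in \mathcal{O}_K\}$ together with $\emptyset$. -/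
/-!
A vertex `x` of `C` can be written `u * y` with `u` a power of `ζ` and `arg y ∈ [0, arg ζ)`,
since rotating by a suitable power of `ζ` brings any argument into this sector. As `C` is
invariant under the units, `y` is again a vertex, and `s • D ⊆ C` for every `s ∈ C`; since `C` is
the convex hull of its finitely many vertices, it is the hull of the sets `s • D` with `s` a vertex
in the sector. So every polygon is a finite hull-union of generators `h • D`; conversely each
`h • D` is such a polygon, and hull-unions and Minkowski sums of polygons are again polygons.
-/

open Pointwise

/-- The sub-semiring of subsets of `ℂ` generated by a family `G` (for the operations
convex hull of union and Minkowski sum), together with the neutral elements `∅`, `{0}`. -/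
def genSemiring (G : Set (Set ℂ)) : Set (Set ℂ) :=
  ⋂₀ {T : Set (Set ℂ) | G ⊆ T ∧ ∅ ∈ T ∧ {(0 : ℂ)} ∈ T ∧
      (∀ A ∈ T, ∀ B ∈ T, convexHull ℝ (A ∪ B) ∈ T) ∧
      (∀ A ∈ T, ∀ B ∈ T, A + B ∈ T)}

open Complex
open scoped Real

theorem convexHull_smul_of_smulCommClass {𝕜 M E : Type*} [Semiring 𝕜] [PartialOrder 𝕜]
    [AddCommMonoid E] [Module 𝕜 E] [Monoid M] [DistribMulAction M E] [SMulCommClass M 𝕜 E]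
    (c : M) (s : Set E) : convexHull 𝕜 (c • s) = c • convexHull 𝕜 s :=
  ((DistribSMul.toLinearMap 𝕜 E c).image_convexHull s).symm

theorem extremePoints_smul₀ {𝕜 M E : Type*} [Ring 𝕜] [PartialOrder 𝕜] [IsOrderedRing 𝕜]
    [AddCommGroup E] [Module 𝕜 E] [GroupWithZero M] [DistribMulAction M E]
    [SMulCommClass M 𝕜 E] {c : M} (hc : c ≠ 0) (s : Set E) :
    Set.extremePoints 𝕜 (c • s) = c • Set.extremePoints 𝕜 s :=
  (image_extremePoints (DistribMulAction.toLinearEquiv 𝕜 E (Units.mk0 c hc)) s).symm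

theorem Set.Finite.convexHull_extremePoints_convexHull {E : Type*} [NormedAddCommGroup E]
    [NormedSpace ℝ E] {S : Set E} (hS : S.Finite) :
    convexHull ℝ (Set.extremePoints ℝ (convexHull ℝ S)) = convexHull ℝ S := by
  have hext : (Set.extremePoints ℝ (convexHull ℝ S)).Finite :=
    hS.subset extremePoints_convexHull_subset
  simpa only [(hext.isClosed_convexHull ℝ).closure_eq] using
    closure_convexHull_extremePoints (hS.isCompact_convexHull ℝ) (convex_convexHull ℝ S)

theorem eq_convexHull_biUnion_smul_convexHull {U S : Set ℂ} {p : ℂ → Prop} (hS : S.Finite)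
    (hU0 : (0 : ℂ) ∉ U) (hUS : ∀ u ∈ U, u • convexHull ℝ S = convexHull ℝ S)
    (hcover : ∀ x, ∃ u ∈ U, ∃ y, p y ∧ x = u * y) :
    convexHull ℝ S = convexHull ℝ
      (⋃ s ∈ {s ∈ Set.extremePoints ℝ (convexHull ℝ S) | p s}, s • convexHull ℝ U) := by
  have hext := hS.convexHull_extremePoints_convexHull
  have hconv := convex_convexHull ℝ S
  generalize convexHull ℝ S = C at hext hconv hUS ⊢
  apply subset_antisymm
  · refine hext.symm.subset.trans (convexHull_mono ?_)
    intro x hx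
    obtain ⟨u, hu, y, hy, rfl⟩ := hcover x
    have hu0 : u ≠ 0 := ne_of_mem_of_not_mem hu hU0
    have hyext : y ∈ Set.extremePoints ℝ C := by
      rw [← hUS u hu, extremePoints_smul₀ hu0] at hx
      exact (Set.smul_mem_smul_set_iff₀ hu0 _ _).1 hx
    exact Set.mem_biUnion (x := y) ⟨hyext, hy⟩ ⟨u, subset_convexHull ℝ U hu, mul_comm y u⟩
  · refine convexHull_min (Set.iUnion₂_subset fun s hs => ?_) hconv
    rw [← convexHull_smul_of_smulCommClass]
    refine convexHull_min ?_ hconv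
    rintro _ ⟨u, hu, rfl⟩
    rw [← hUS u hu]
    exact ⟨s, extremePoints_subset hs.1, mul_comm u s⟩

theorem interior_convexHull_nonempty_of_mem {s : Set ℂ} {z : ℂ} (h1 : 1 ∈ s) (hm1 : -1 ∈ s)
    (hz : z ∈ s) (hzim : z.im ≠ 0) : (interior (convexHull ℝ s)).Nonempty := by
  rw [interior_convexHull_nonempty_iff_affineSpan_eq_top,
    AffineSubspace.affineSpan_eq_top_iff_vectorSpan_eq_top_of_nonempty ℝ ℂ ℂ ⟨1, h1⟩,
    eq_top_iff, ← RCLike.span_one_I (K := ℂ), Submodule.span_le]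
  set V := vectorSpan ℝ s
  have hone : (1 : ℂ) ∈ V := by
    convert V.smul_mem (1 / 2 : ℝ) (vsub_mem_vectorSpan ℝ h1 hm1) using 1
    norm_num
  have hz : z ∈ V := by
    simpa using V.add_mem (vsub_mem_vectorSpan ℝ hz h1) hone
  have hI : I = (z.im⁻¹ : ℝ) • (z - z.re • 1) := by
    apply Complex.ext <;> simp [hzim]
  rintro _ (rfl | rfl)
  · exact hone
  · rw [RCLike.I_to_complex, hI]
    exact V.smul_mem _ (V.sub_mem hz (V.smul_mem _ hone))

section Powers

variable {M : Type*} [Monoid M] {a : M} {k : ℕ}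

theorem finite_setOf_eq_pow (hk : 0 < k) (ha : a ^ k = 1) :
    {z : M | ∃ n : ℕ, z = a ^ n}.Finite :=
  ((Set.finite_Iio k).image (a ^ ·)).subset fun _ ⟨n, hn⟩ =>
    ⟨n % k, Nat.mod_lt n hk, by rw [hn]; exact (pow_eq_pow_mod n ha).symm⟩

theorem smul_setOf_eq_pow (hk : 0 < k) (ha : a ^ k = 1) {u : M}
    (hu : u ∈ {z : M | ∃ n : ℕ, z = a ^ n}) :
    u • {z : M | ∃ n : ℕ, z = a ^ n} = {z : M | ∃ n : ℕ, z = a ^ n} := by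
  obtain ⟨j, rfl⟩ := hu
  refine subset_antisymm ?_ fun z ⟨n, hn⟩ => ⟨a ^ (n + j * (k - 1)), ⟨_, rfl⟩, ?_⟩
  · rintro _ ⟨_, ⟨n, rfl⟩, rfl⟩
    exact ⟨j + n, (pow_add a j n).symm⟩
  · have hexp : j + (n + j * (k - 1)) = n + k * j := by
      obtain ⟨k, rfl⟩ := Nat.exists_eq_add_of_lt hk
      simp only [zero_add, Nat.add_sub_cancel]
      ring
    change a ^ j * a ^ (n + j * (k - 1)) = z
    rw [← pow_add, hexp, pow_add, pow_mul, ha, one_pow, mul_one, hn]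

end Powers

theorem neg_setOf_eq_pow {R : Type*} [Ring R] {a : R} {p : ℕ} (hp : a ^ p = -1) :
    -{z : R | ∃ n : ℕ, z = a ^ n} = {z : R | ∃ n : ℕ, z = a ^ n} := by
  refine subset_antisymm (fun z ⟨n, hn⟩ => ⟨p + n, ?_⟩) fun z ⟨n, hn⟩ => ⟨p + n, ?_⟩
  · rw [pow_add, hp, neg_one_mul, ← hn, neg_neg]
  · rw [pow_add, hp, neg_one_mul, hn]

theorem exists_pow_eq_zpow_of_pow_eq_one {G₀ : Type*} [GroupWithZero G₀] {a : G₀} {k : ℕ}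
    (hk : 0 < k) (ha : a ^ k = 1) (m : ℤ) : ∃ n : ℕ, a ^ n = a ^ m := by
  have ha0 : a ≠ 0 := by rintro rfl; simp [hk.ne'] at ha
  refine ⟨(m % k).toNat, ?_⟩
  rw [← zpow_natCast, Int.toNat_of_nonneg (Int.emod_nonneg m (by omega))]
  conv_rhs => rw [← Int.emod_add_mul_ediv m k]
  rw [zpow_add₀ ha0, zpow_mul, zpow_natCast, ha, one_zpow, mul_one]

section IntSpan

variable {R : Type*} [CommRing R] {ζ : R}

theorem add_mem_setOf_int_add_int_mul {x y : R} (hx : x ∈ {z : R | ∃ a b : ℤ, z = a + b * ζ})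
    (hy : y ∈ {z : R | ∃ a b : ℤ, z = a + b * ζ}) :
    x + y ∈ {z : R | ∃ a b : ℤ, z = a + b * ζ} := by
  obtain ⟨a, b, rfl⟩ := hx
  obtain ⟨c, d, rfl⟩ := hy
  exact ⟨a + c, b + d, by push_cast; ring⟩

theorem mul_pow_mem_setOf_int_add_int_mul (hζ2 : ζ ^ 2 ∈ {z : R | ∃ a b : ℤ, z = a + b * ζ})
    {h : R} (hh : h ∈ {z : R | ∃ a b : ℤ, z = a + b * ζ}) (n : ℕ) :
    h * ζ ^ n ∈ {z : R | ∃ a b : ℤ, z = a + b * ζ} := by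
  obtain ⟨e, f, he⟩ := hζ2
  induction n with
  | zero => simpa using hh
  | succ n ih =>
    obtain ⟨a, b, hab⟩ := ih
    refine ⟨b * e, a + b * f, ?_⟩
    rw [pow_succ, ← mul_assoc, hab]
    push_cast
    linear_combination (b : R) * he

end IntSpan

theorem exists_zpow_mul_of_arg_mem_Ico {ζ : ℂ} (hζ : ‖ζ‖ = 1) (hθ : 0 < arg ζ) (x : ℂ) :
    ∃ m : ℤ, ∃ y : ℂ, (0 ≤ arg y ∧ arg y < arg ζ) ∧ x = ζ ^ m * y := by
  rcases eq_or_ne x 0 with rfl | hx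
  · exact ⟨0, 0, by simp [hθ], by simp⟩
  have hζexp : ζ = exp (arg ζ * I) := by simpa [hζ] using (norm_mul_exp_arg_mul_I ζ).symm
  obtain ⟨φ, m, hφ, hφx⟩ : ∃ φ : ℝ, ∃ m : ℤ, φ ∈ Set.Ico 0 (arg ζ) ∧ arg x = φ + m * arg ζ :=
    ⟨_, _, by simpa using toIcoMod_mem_Ico hθ 0 (arg x), by
      rw [← self_sub_toIcoDiv_zsmul hθ 0 (arg x), zsmul_eq_mul]; ring⟩
  refine ⟨m, ‖x‖ * exp (φ * I), ?_, ?_⟩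
  · have hφπ : φ ∈ Set.Ioc (-π) (-π + 2 * π) :=
      ⟨by linarith [hφ.1, Real.pi_pos], by linarith [hφ.2, arg_le_pi ζ]⟩
    rwa [arg_real_mul _ (norm_pos_iff.2 hx), arg_exp_mul_I, (toIocMod_eq_self _).2 hφπ]
  · conv_lhs => rw [← norm_mul_exp_arg_mul_I x, hφx]
    conv_rhs => rw [hζexp, ← exp_int_mul, mul_left_comm, ← exp_add]
    push_cast
    ring_nf

theorem exists_pow_mul_of_arg_mem_Ico {ζ : ℂ} {k : ℕ} (hk0 : 0 < k) (hk : ζ ^ k = 1)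
    (hθ : 0 < arg ζ) (x : ℂ) :
    ∃ u ∈ {z : ℂ | ∃ n : ℕ, z = ζ ^ n}, ∃ y, (0 ≤ arg y ∧ arg y < arg ζ) ∧ x = u * y := by
  obtain ⟨m, y, hy, rfl⟩ :=
    exists_zpow_mul_of_arg_mem_Ico (norm_eq_one_of_pow_eq_one hk hk0.ne') hθ x
  obtain ⟨n, hn⟩ := exists_pow_eq_zpow_of_pow_eq_one hk0 hk m
  exact ⟨ζ ^ n, ⟨n, rfl⟩, y, hy, by rw [hn]⟩

section Zeta

variable {ζ : ℂ}

theorem zeta_im_pos (hζ : ζ = I ∨ ζ = (1 + I * √3) / 2) : 0 < ζ.im := by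
  rcases hζ with rfl | rfl <;> simp

theorem arg_zeta_pos (hζ : ζ = I ∨ ζ = (1 + I * √3) / 2) : 0 < arg ζ := by
  have him := zeta_im_pos hζ
  exact lt_of_le_of_ne (arg_nonneg_iff.2 him.le) fun h => him.ne' (arg_eq_zero_iff.1 h.symm).2

theorem zeta_sq (hζ : ζ = I ∨ ζ = (1 + I * √3) / 2) : ζ ^ 2 = -1 ∨ ζ ^ 2 = ζ - 1 := by
  rcases hζ with rfl | rfl
  · exact Or.inl I_sq
  · right
    have h3 : ((√3 : ℝ) : ℂ) ^ 2 = 3 := by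
      rw [← ofReal_pow, Real.sq_sqrt (by norm_num : (0:ℝ) ≤ 3)]; norm_num
    linear_combination (I ^ 2 / 4) * h3 + (3 / 4 : ℂ) * I_sq

theorem zeta_sq_mem (hζ : ζ = I ∨ ζ = (1 + I * √3) / 2) :
    ζ ^ 2 ∈ {z : ℂ | ∃ a b : ℤ, z = a + b * ζ} := by
  rcases zeta_sq hζ with h | h
  exacts [⟨-1, 0, by simp [h]⟩, ⟨-1, 1, by simp [h]; ring⟩]

theorem exists_zeta_pow_eq_neg_one (hζ : ζ = I ∨ ζ = (1 + I * √3) / 2) :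
    ∃ p : ℕ, ζ ^ p = -1 := by
  rcases zeta_sq hζ with h | h
  exacts [⟨2, h⟩, ⟨3, by linear_combination (ζ + 1) * h⟩]

end Zeta

def IsUnitInvariantPolygon (O U C : Set ℂ) : Prop :=
  (∃ S : Finset ℂ, (S : Set ℂ) ⊆ O ∧ C = convexHull ℝ (S : Set ℂ)) ∧
    (interior C).Nonempty ∧ C = -C ∧ ∀ u ∈ U, u • C = C

namespace IsUnitInvariantPolygon

variable {O U A B C : Set ℂ}

theorem convex (hC : IsUnitInvariantPolygon O U C) : Convex ℝ C := by
  obtain ⟨⟨S, -, rfl⟩, -⟩ := hC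
  exact convex_convexHull ℝ _

theorem zero_mem (hC : IsUnitInvariantPolygon O U C) : (0 : ℂ) ∈ C := by
  obtain ⟨x, hx⟩ := hC.2.1.mono interior_subset
  have hnx : -x ∈ C := by rw [hC.2.2.1]; simpa using hx
  simpa using hC.convex.midpoint_mem hx hnx

theorem convexHull_union (hA : IsUnitInvariantPolygon O U A)
    (hB : IsUnitInvariantPolygon O U B) : IsUnitInvariantPolygon O U (convexHull ℝ (A ∪ B)) := by
  obtain ⟨⟨S, hSO, rfl⟩, hintA, hsymA, hinvA⟩ := hA
  obtain ⟨⟨T, hTO, rfl⟩, -, hsymB, hinvB⟩ := hB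
  refine ⟨⟨S ∪ T, ?_, ?_⟩, ?_, ?_, fun u hu => ?_⟩
  · rw [Finset.coe_union]; exact Set.union_subset hSO hTO
  · rw [convexHull_convexHull_union_left, convexHull_convexHull_union_right, Finset.coe_union]
  · exact hintA.mono (interior_mono (Set.subset_union_left.trans (subset_convexHull ℝ _)))
  · rw [← convexHull_neg, Set.union_neg, ← hsymA, ← hsymB]
  · rw [← convexHull_smul_of_smulCommClass, Set.smul_set_union, hinvA u hu, hinvB u hu]

theorem add (hO : ∀ x ∈ O, ∀ y ∈ O, x + y ∈ O) (hA : IsUnitInvariantPolygon O U A)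
    (hB : IsUnitInvariantPolygon O U B) : IsUnitInvariantPolygon O U (A + B) := by
  obtain ⟨⟨S, hSO, rfl⟩, hintA, hsymA, hinvA⟩ := hA
  obtain ⟨⟨T, hTO, rfl⟩, hintB, hsymB, hinvB⟩ := hB
  refine ⟨⟨S + T, ?_, ?_⟩, ?_, ?_, fun u hu => ?_⟩
  · rw [Finset.coe_add]
    rintro _ ⟨x, hx, y, hy, rfl⟩
    exact hO x (hSO hx) y (hTO hy)
  · rw [Finset.coe_add, convexHull_add]
  · obtain ⟨y, hy⟩ := hintB
    exact ⟨_, interior_maximal (Set.add_subset_add_right interior_subset)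
      isOpen_interior.add_right (Set.add_mem_add hintA.some_mem (interior_subset hy))⟩
  · rw [neg_add, ← hsymA, ← hsymB]
  · rw [smul_add, hinvA u hu, hinvB u hu]

theorem smul_convexHull (hUfin : U.Finite) (hUO : ∀ h ∈ O, ∀ u ∈ U, h * u ∈ O)
    (hint : (interior (convexHull ℝ U)).Nonempty) (hneg : -U = U) (hsmul : ∀ u ∈ U, u • U = U)
    {h : ℂ} (hh : h ∈ O) (hh0 : h ≠ 0) : IsUnitInvariantPolygon O U (h • convexHull ℝ U) := by
  refine ⟨⟨(h • hUfin.toFinset), ?_, ?_⟩, ?_, ?_, fun u hu => ?_⟩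
  · rw [Finset.coe_smul_finset, Set.Finite.coe_toFinset]
    rintro _ ⟨u, hu, rfl⟩
    exact hUO h hh u hu
  · rw [Finset.coe_smul_finset, Set.Finite.coe_toFinset, convexHull_smul_of_smulCommClass]
  · rw [interior_smul₀ hh0]
    exact hint.smul_set
  · rw [← Set.smul_set_neg, ← convexHull_neg, hneg]
  · rw [smul_comm, ← convexHull_smul_of_smulCommClass, hsmul u hu]

end IsUnitInvariantPolygon

/-- The semiring `𝒞~_{𝒪_K}` of the statement, for `O = 𝒪_K` and `U = 𝒰_K`. -/
def unitPolygons (O U : Set ℂ) : Set (Set ℂ) :=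
  {C | C = ∅ ∨ C = {0} ∨ IsUnitInvariantPolygon O U C}

section unitPolygons

variable {O U A B C : Set ℂ}

theorem convex_of_mem_unitPolygons (hC : C ∈ unitPolygons O U) : Convex ℝ C := by
  rcases hC with rfl | rfl | hC
  exacts [convex_empty, convex_singleton 0, hC.convex]

theorem zero_mem_of_mem_unitPolygons (hC : C ∈ unitPolygons O U) (hne : C ≠ ∅) : (0 : ℂ) ∈ C := by
  rcases hC with rfl | rfl | hC
  exacts [absurd rfl hne, rfl, hC.zero_mem]

theorem convexHull_union_mem_unitPolygons (hA : A ∈ unitPolygons O U) (hB : B ∈ unitPolygons O U) :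
    convexHull ℝ (A ∪ B) ∈ unitPolygons O U := by
  rcases eq_or_ne A ∅ with rfl | hA0
  · simpa [(convex_of_mem_unitPolygons hB).convexHull_eq] using hB
  rcases eq_or_ne B ∅ with rfl | hB0
  · simpa [(convex_of_mem_unitPolygons hA).convexHull_eq] using hA
  rcases hA with rfl | rfl | hA'
  · exact absurd rfl hA0
  · rwa [Set.union_eq_self_of_subset_left
      (Set.singleton_subset_iff.2 (zero_mem_of_mem_unitPolygons hB hB0)),
      (convex_of_mem_unitPolygons hB).convexHull_eq]
  rcases hB with rfl | rfl | hB'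
  · exact absurd rfl hB0
  · rw [Set.union_eq_self_of_subset_right (Set.singleton_subset_iff.2 hA'.zero_mem),
      hA'.convex.convexHull_eq]
    exact Or.inr (Or.inr hA')
  · exact Or.inr (Or.inr (hA'.convexHull_union hB'))

theorem add_mem_unitPolygons (hO : ∀ x ∈ O, ∀ y ∈ O, x + y ∈ O) (hA : A ∈ unitPolygons O U)
    (hB : B ∈ unitPolygons O U) : A + B ∈ unitPolygons O U := by
  rcases hA with rfl | rfl | hA
  · simp [unitPolygons]
  · rwa [Set.singleton_zero, zero_add]
  rcases hB with rfl | rfl | hB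
  · simp [unitPolygons]
  · rw [Set.singleton_zero, add_zero]
    exact Or.inr (Or.inr hA)
  · exact Or.inr (Or.inr (hA.add hO hB))

end unitPolygons

theorem smul_convexHull_setOf_eq_pow_mem_unitPolygons {ζ : ℂ} {k p : ℕ} (hk0 : 0 < k)
    (hk : ζ ^ k = 1) (hp : ζ ^ p = -1) (hζim : ζ.im ≠ 0)
    (hζ2 : ζ ^ 2 ∈ {z : ℂ | ∃ a b : ℤ, z = a + b * ζ}) {h : ℂ}
    (hh : h ∈ {z : ℂ | ∃ a b : ℤ, z = a + b * ζ}) :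
    h • convexHull ℝ {z : ℂ | ∃ n : ℕ, z = ζ ^ n} ∈
      unitPolygons {z : ℂ | ∃ a b : ℤ, z = a + b * ζ} {z : ℂ | ∃ n : ℕ, z = ζ ^ n} := by
  have hone : (1 : ℂ) ∈ {z : ℂ | ∃ n : ℕ, z = ζ ^ n} := ⟨0, (pow_zero ζ).symm⟩
  rcases eq_or_ne h 0 with rfl | hh0
  · exact Or.inr (Or.inl (Set.zero_smul_set ⟨1, subset_convexHull ℝ _ hone⟩))
  refine Or.inr (Or.inr (IsUnitInvariantPolygon.smul_convexHull (finite_setOf_eq_pow hk0 hk)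
    ?_ ?_ (neg_setOf_eq_pow hp) (fun u hu => smul_setOf_eq_pow hk0 hk hu) hh hh0))
  · rintro h hh _ ⟨n, rfl⟩
    exact mul_pow_mem_setOf_int_add_int_mul hζ2 hh n
  · exact interior_convexHull_nonempty_of_mem hone ⟨p, hp.symm⟩ ⟨1, (pow_one ζ).symm⟩ hζim

theorem genSemiring_subset {G T : Set (Set ℂ)} (hG : G ⊆ T) (hempty : ∅ ∈ T)
    (hzero : {(0 : ℂ)} ∈ T) (hunion : ∀ A ∈ T, ∀ B ∈ T, convexHull ℝ (A ∪ B) ∈ T)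
    (hadd : ∀ A ∈ T, ∀ B ∈ T, A + B ∈ T) : genSemiring G ⊆ T :=
  Set.sInter_subset_of_mem ⟨hG, hempty, hzero, hunion, hadd⟩

theorem convexHull_biUnion_mem_genSemiring {G : Set (Set ℂ)} {ι : Type*} {F : Set ι}
    (hF : F.Finite) {A : ι → Set ℂ} (hA : ∀ i ∈ F, A i ∈ G) :
    convexHull ℝ (⋃ i ∈ F, A i) ∈ genSemiring G := by
  refine Set.mem_sInter.2 ?_
  rintro T ⟨hG, hempty, -, hunion, -⟩
  induction F, hF using Set.Finite.induction_on with
  | empty => simpa using hempty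
  | @insert i F _ _ ih =>
    rw [Set.biUnion_insert, ← convexHull_convexHull_union_right]
    exact hunion _ (hG (hA i (Set.mem_insert i F)))
      _ (ih fun j hj => hA j (Set.mem_insert_of_mem i hj))

theorem genSemiring_subset_unitPolygons {O U : Set ℂ} {G : Set (Set ℂ)}
    (hO : ∀ x ∈ O, ∀ y ∈ O, x + y ∈ O) (hG : G ⊆ unitPolygons O U) :
    genSemiring G ⊆ unitPolygons O U :=
  genSemiring_subset hG (Or.inl rfl) (Or.inr (Or.inl rfl))
    (fun _ hA _ hB => convexHull_union_mem_unitPolygons hA hB)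
    (fun _ hA _ hB => add_mem_unitPolygons hO hA hB)

theorem unitPolygons_subset_genSemiring {O U : Set ℂ} {p : ℂ → Prop} (hU0 : (0 : ℂ) ∉ U)
    (hcover : ∀ x, ∃ u ∈ U, ∃ y, p y ∧ x = u * y) :
    unitPolygons O U ⊆ genSemiring {C | ∃ h ∈ O, C = h • convexHull ℝ U} := by
  rintro C (rfl | rfl | ⟨⟨S, hSO, rfl⟩, -, -, hUC⟩)
  · exact Set.mem_sInter.2 fun T hT => hT.2.1
  · exact Set.mem_sInter.2 fun T hT => hT.2.2.1
  · have hext := extremePoints_convexHull_subset (𝕜 := ℝ) (A := (S : Set ℂ))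
    rw [eq_convexHull_biUnion_smul_convexHull S.finite_toSet hU0 hUC hcover]
    exact convexHull_biUnion_mem_genSemiring
      ((S.finite_toSet.subset hext).subset (Set.sep_subset _ _))
      fun s hs => ⟨s, hSO (hext hs.1), rfl⟩

/-- for `K = ℚ(i)` or `K = ℚ(i√3)` (with `ζ` a generator of the unit group
`𝒰_K` of `𝒪_K = ℤ[ζ]`, and `D_K` the convex polygon with vertex set `𝒰_K`), every
nonempty, nonzero element `C` of `𝒞~_{𝒪_K}` equals
`Conv(⋃_{s ∈ 𝒮₊(C)} s·D_K)`, where `𝒮₊(C)` is the set of vertices (extreme points) of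
`C` with argument in `[0, θ_K)`, `θ_K = arg ζ`; consequently `𝒞~_{𝒪_K}` is the
semiring generated by `{h·D_K : h ∈ 𝒪_K}` (together with `∅`). -/
theorem stmt10 (ζ : ℂ)
    (hζ : ζ = Complex.I ∨ ζ = (1 + Complex.I * Real.sqrt 3) / 2)
    (O U D : Set ℂ) (hO : O = {z : ℂ | ∃ a b : ℤ, z = (a : ℂ) + (b : ℂ) * ζ})
    (hU : U = {z : ℂ | ∃ n : ℕ, z = ζ ^ n})
    (hD : D = convexHull ℝ U)
    (CT : Set (Set ℂ))
    (hCT : CT = {C : Set ℂ | C = ∅ ∨ C = {0} ∨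
      ((∃ S : Finset ℂ, (↑S : Set ℂ) ⊆ O ∧ C = convexHull ℝ ↑S) ∧
        (interior C).Nonempty ∧ C = -C ∧ ∀ u ∈ U, u • C = C)}) :
    (∀ C ∈ CT, C ≠ ∅ → C ≠ {0} →
      C = convexHull ℝ
        (⋃ s ∈ {s ∈ Set.extremePoints ℝ C |
            0 ≤ Complex.arg s ∧ Complex.arg s < Complex.arg ζ}, s • D)) ∧
    CT = genSemiring {C : Set ℂ | ∃ h ∈ O, C = h • D} := by
  subst hO hU hD hCT
  obtain ⟨p, hp⟩ := exists_zeta_pow_eq_neg_one hζ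
  have hp0 : p ≠ 0 := by rintro rfl; norm_num at hp
  have hk0 : 0 < p * 2 := by omega
  have hk : ζ ^ (p * 2) = 1 := by rw [pow_mul, hp, neg_one_sq]
  have hU0 : (0 : ℂ) ∉ {z : ℂ | ∃ n : ℕ, z = ζ ^ n} := fun ⟨n, hn⟩ =>
    pow_ne_zero n (IsUnit.of_pow_eq_one hk hk0.ne').ne_zero hn.symm
  have hcover := exists_pow_mul_of_arg_mem_Ico hk0 hk (arg_zeta_pos hζ)
  refine ⟨?_, subset_antisymm (unitPolygons_subset_genSemiring hU0 hcover)
    (genSemiring_subset_unitPolygons (fun x hx y hy => add_mem_setOf_int_add_int_mul hx hy) ?_)⟩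
  · rintro C (rfl | rfl | ⟨⟨S, -, rfl⟩, -, -, hUC⟩) hC₀ hC₁
    · exact absurd rfl hC₀
    · exact absurd rfl hC₁
    · exact eq_convexHull_biUnion_smul_convexHull S.finite_toSet hU0 hUC hcover
  · rintro _ ⟨h, hh, rfl⟩
    exact smul_convexHull_setOf_eq_pow_mem_unitPolygons hk0 hk hp (zeta_im_pos hζ).ne'
      (zeta_sq_mem hζ) hh
end

section
/- Let $K$ be an imaginary quadratic number field with class number 1 and $f$ a direct $\mathbb{B}$-automorphism of the semiring $\mathcal{C}_{K,\mathbb{C}}$. Then $f(\emptyset) = \emptyset$, $f(\{0\}) = \{0\}$, and $f$ commutes with all complex homotheties: $f(\lambda C) = \lambda f(C)$ for all $\lambda \in \mathbb{C}$ and $C \in \mathcal{C}_{K,\mathbb{C}}$. -/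
/-! The only compact sets `A` with `A + A = A` are `∅` and `{0}`, and additivity with injectivity
tells them apart, so `f` fixes both. Every member of `𝒞_{K,ℂ}` is a polytope containing `0` (or `∅`),
so `f` is monotone (it preserves `Conv (· ∪ ·)`) and `r ↦ r • C` is monotone on `r ≥ 0`. Additivity and
convexity give `f (n • C) = n • f C`, hence homogeneity for positive rationals, and squeezing a real
`r` between rationals in the closed sets `f (r • C)`, `f C` extends it to `r > 0`. Writing
`λ = ‖λ‖ u` with `‖u‖ = 1` reduces complex homotheties to real ones and the `𝕊¹`-equivariance. -/

open Pointwise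

/-- The semiring `𝒞_{K,ℂ}` generated by the translates `h·D_K`, `h ∈ ℂ`, of the
fundamental polygon `D_K` of an imaginary quadratic field `K` of class number 1. -/
def CKC (D : Set ℂ) : Set (Set ℂ) :=
  genSemiring {C : Set ℂ | ∃ h : ℂ, C = h • D}

theorem Complex.ofReal_smul_set (r : ℝ) (s : Set ℂ) : (r : ℂ) • s = r • s := by
  ext; simp [Set.mem_smul_set, Complex.real_smul]

theorem Complex.smul_convexHull (a : ℂ) (s : Set ℂ) :
    a • convexHull ℝ s = convexHull ℝ (a • s) := by
  rw [← Set.image_smul, ← Set.image_smul]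
  exact (DistribSMul.toLinearMap ℝ ℂ a).image_convexHull s

section RealVectorSpace

variable {E : Type*} [AddCommGroup E] [Module ℝ E]

theorem Convex.zero_mem_of_neg_eq {D : Set E} (hD : Convex ℝ D) (hsymm : -D = D)
    (hne : D.Nonempty) : (0 : E) ∈ D := by
  obtain ⟨x, hx⟩ := hne
  have hnx : -x ∈ D := by rw [← hsymm]; simpa using hx
  simpa using hD hx hnx (by norm_num : (0 : ℝ) ≤ 1 / 2) (by norm_num : (0 : ℝ) ≤ 1 / 2)
    (by norm_num)

theorem Convex.smul_subset_smul_of_le {C : Set E} (hC : Convex ℝ C)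
    (h0 : C.Nonempty → (0 : E) ∈ C) {s t : ℝ} (hs : 0 ≤ s) (hst : s ≤ t) :
    s • C ⊆ t • C := by
  rintro _ ⟨c, hc, rfl⟩
  rcases (hs.trans hst).lt_or_eq' with ht | rfl
  · refine ⟨(s / t) • c, hC.smul_mem_of_zero_mem (h0 ⟨c, hc⟩) hc
      ⟨div_nonneg hs ht.le, (div_le_one ht).mpr hst⟩, ?_⟩
    simp only [smul_smul, mul_div_cancel₀ _ ht.ne']
  · obtain rfl : s = 0 := le_antisymm hst hs
    exact ⟨c, hc, rfl⟩

end RealVectorSpace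

theorem mem_of_forall_ratCast_mem_Ioo {s : Set ℝ} (hs : IsClosed s) {a b : ℝ} (hab : a < b)
    (h : ∀ q : ℚ, (q : ℝ) ∈ Set.Ioo a b → (q : ℝ) ∈ s) : b ∈ s := by
  have hrat : Set.Ioo a b ∩ Set.range ((↑) : ℚ → ℝ) ⊆ s := by
    rintro _ ⟨hq, q, rfl⟩
    exact h q hq
  have hIoo : Set.Ioo a b ⊆ s :=
    (Rat.denseRange_cast.open_subset_closure_inter isOpen_Ioo).trans (closure_minimal hrat hs)
  apply closure_minimal hIoo hs
  rw [closure_Ioo hab.ne]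
  exact Set.right_mem_Icc.mpr hab.le

theorem eq_empty_or_eq_zero_of_add_self {E : Type*} [NormedAddCommGroup E] [NormedSpace ℝ E]
    {A : Set E} (hA : IsCompact A) (hAA : A + A = A) : A = ∅ ∨ A = {0} := by
  refine A.eq_empty_or_nonempty.imp id fun hne => ?_
  obtain ⟨a, ha, hmax⟩ := hA.exists_isMaxOn hne continuous_norm.continuousOn
  have h2a : ‖a + a‖ ≤ ‖a‖ := hmax (hAA ▸ Set.add_mem_add ha ha)
  have hnorm : ‖a + a‖ = 2 * ‖a‖ := by rw [← two_smul ℝ a, norm_smul, Real.norm_two]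
  have ha0 : ‖a‖ = 0 := by linarith [norm_nonneg a]
  refine Set.eq_singleton_iff_nonempty_unique_mem.mpr ⟨hne, fun x hx => ?_⟩
  exact norm_le_zero_iff.mp (ha0 ▸ hmax hx)

section genSemiring

variable {G : Set (Set ℂ)}

theorem genSemiring_induction {p : Set ℂ → Prop} (hG : ∀ C ∈ G, p C) (hempty : p ∅)
    (hzero : p {0}) (hconv : ∀ A, p A → ∀ B, p B → p (convexHull ℝ (A ∪ B)))
    (hadd : ∀ A, p A → ∀ B, p B → p (A + B)) : ∀ C ∈ genSemiring G, p C :=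
  fun _ hC => hC {C | p C} ⟨hG, hempty, hzero, hconv, hadd⟩

theorem subset_genSemiring : G ⊆ genSemiring G := fun _ hC _ hT => hT.1 hC

theorem empty_mem_genSemiring : ∅ ∈ genSemiring G := fun _ hT => hT.2.1

theorem zero_mem_genSemiring : {0} ∈ genSemiring G := fun _ hT => hT.2.2.1

theorem convexHull_union_mem_genSemiring {A B : Set ℂ} (hA : A ∈ genSemiring G)
    (hB : B ∈ genSemiring G) : convexHull ℝ (A ∪ B) ∈ genSemiring G :=
  fun T hT => hT.2.2.2.1 A (hA T hT) B (hB T hT)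

theorem add_mem_genSemiring {A B : Set ℂ} (hA : A ∈ genSemiring G) (hB : B ∈ genSemiring G) :
    A + B ∈ genSemiring G :=
  fun T hT => hT.2.2.2.2 A (hA T hT) B (hB T hT)

theorem smul_mem_genSemiring (hG : ∀ a : ℂ, ∀ C ∈ G, a • C ∈ G) (a : ℂ) :
    ∀ C ∈ genSemiring G, a • C ∈ genSemiring G := by
  refine genSemiring_induction (fun C hC => subset_genSemiring (hG a C hC)) ?_ ?_ ?_ ?_
  · simpa using empty_mem_genSemiring
  · simpa using zero_mem_genSemiring
  · intro A hA B hB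
    rw [Complex.smul_convexHull, Set.smul_set_union]
    exact convexHull_union_mem_genSemiring hA hB
  · intro A hA B hB
    rw [smul_add]
    exact add_mem_genSemiring hA hB

end genSemiring

-- Includes `∅ = convexHull ℝ ∅`.
def IsPolytope (C : Set ℂ) : Prop :=
  ∃ s : Set ℂ, s.Finite ∧ convexHull ℝ s = C

theorem IsPolytope.convex {C : Set ℂ} (hC : IsPolytope C) : Convex ℝ C := by
  obtain ⟨s, -, rfl⟩ := hC
  exact convex_convexHull ℝ s

theorem IsPolytope.isCompact {C : Set ℂ} (hC : IsPolytope C) : IsCompact C := by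
  obtain ⟨s, hs, rfl⟩ := hC
  exact hs.isCompact_convexHull ℝ

theorem IsPolytope.smul {C : Set ℂ} (hC : IsPolytope C) (a : ℂ) : IsPolytope (a • C) := by
  obtain ⟨s, hs, rfl⟩ := hC
  exact ⟨a • s, hs.smul_set, (Complex.smul_convexHull a s).symm⟩

theorem isPolytope_of_mem_genSemiring {G : Set (Set ℂ)} (hG : ∀ C ∈ G, IsPolytope C) :
    ∀ C ∈ genSemiring G, IsPolytope C := by
  refine genSemiring_induction hG ⟨∅, Set.finite_empty, convexHull_empty⟩
    ⟨{0}, Set.finite_singleton 0, convexHull_singleton 0⟩ ?_ ?_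
  · rintro _ ⟨s, hs, rfl⟩ _ ⟨t, ht, rfl⟩
    exact ⟨s ∪ t, hs.union ht, by
      rw [convexHull_convexHull_union_left, convexHull_convexHull_union_right]⟩
  · rintro _ ⟨s, hs, rfl⟩ _ ⟨t, ht, rfl⟩
    exact ⟨s + t, hs.add ht, convexHull_add s t⟩

theorem zero_mem_of_mem_genSemiring {G : Set (Set ℂ)} (hG : ∀ C ∈ G, C.Nonempty → (0 : ℂ) ∈ C) :
    ∀ C ∈ genSemiring G, C.Nonempty → (0 : ℂ) ∈ C := by
  refine genSemiring_induction hG (fun h => absurd h Set.not_nonempty_empty)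
    (fun _ => rfl) ?_ ?_
  · intro A hA B hB hAB
    rcases Set.union_nonempty.mp (convexHull_nonempty_iff.mp hAB) with hne | hne
    · exact subset_convexHull ℝ _ (Or.inl (hA hne))
    · exact subset_convexHull ℝ _ (Or.inr (hB hne))
  · intro A hA B hB hAB
    exact ⟨0, hA hAB.of_add_left, 0, hB hAB.of_add_right, add_zero 0⟩

-- A `𝔹`-automorphism of `S`: a semiring automorphism for `⊕ = Conv (· ∪ ·)` and `⊗ = +`.
structure IsBAutomorphism (S : Set (Set ℂ)) (f : Set ℂ → Set ℂ) : Prop where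
  bijOn : Set.BijOn f S S
  map_convexHull_union : ∀ A ∈ S, ∀ B ∈ S, f (convexHull ℝ (A ∪ B)) = convexHull ℝ (f A ∪ f B)
  map_add : ∀ A ∈ S, ∀ B ∈ S, f (A + B) = f A + f B

namespace IsBAutomorphism

variable {S : Set (Set ℂ)} {f : Set ℂ → Set ℂ} {C : Set ℂ}

theorem monotoneOn (hf : IsBAutomorphism S f) (hconv : ∀ C ∈ S, Convex ℝ C) :
    MonotoneOn f S := by
  intro A hA B hB hAB
  have hfB := hf.map_convexHull_union A hA B hB
  rw [Set.union_eq_self_of_subset_left hAB, (hconv B hB).convexHull_eq] at hfB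
  exact hfB ▸ Set.subset_union_left.trans (subset_convexHull ℝ _)

theorem map_empty_and_map_zero (hf : IsBAutomorphism S f) (hempty : ∅ ∈ S) (hzero : {0} ∈ S)
    (hcpt : ∀ C ∈ S, IsCompact C) : f ∅ = ∅ ∧ f {0} = {0} := by
  have hE := eq_empty_or_eq_zero_of_add_self (hcpt _ (hf.bijOn.mapsTo hempty))
    (by rw [← hf.map_add _ hempty _ hempty, Set.empty_add])
  have hZ := eq_empty_or_eq_zero_of_add_self (hcpt _ (hf.bijOn.mapsTo hzero))
    (by rw [← hf.map_add _ hzero _ hzero, Set.singleton_add_singleton, add_zero])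
  have hEZ : f ∅ ≠ f {0} := fun h =>
    (Set.singleton_nonempty (0 : ℂ)).ne_empty (hf.bijOn.injOn hempty hzero h).symm
  -- If `f ∅ = {0}`, then `f {0} = ∅` and `f (∅ + {0}) = f ∅ + f {0}` reads `{0} = ∅`.
  have hfE : f ∅ = ∅ := by
    refine hE.resolve_right fun hE0 => ?_
    have hZ0 : f {0} = ∅ := hZ.resolve_right fun h => hEZ (hE0.trans h.symm)
    have := hf.map_add _ hempty _ hzero
    rw [Set.empty_add, hE0, hZ0, Set.add_empty] at this
    exact Set.singleton_ne_empty 0 this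
  exact ⟨hfE, hZ.resolve_left fun h => hEZ (hfE.trans h.symm)⟩

theorem map_zero_smul (hf : IsBAutomorphism S f) (hempty : ∅ ∈ S) (hzero : {0} ∈ S)
    (hcpt : ∀ C ∈ S, IsCompact C) (hC : C ∈ S) : f ((0 : ℝ) • C) = (0 : ℝ) • f C := by
  obtain ⟨hfE, hfZ⟩ := hf.map_empty_and_map_zero hempty hzero hcpt
  rcases C.eq_empty_or_nonempty with rfl | hne
  · rw [Set.smul_set_empty, hfE, Set.smul_set_empty]
  have hfne : (f C).Nonempty := Set.nonempty_iff_ne_empty.mpr fun h =>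
    hne.ne_empty (hf.bijOn.injOn hC hempty (h.trans hfE.symm))
  rw [Set.zero_smul_set hne, Set.zero_smul_set hfne, ← Set.singleton_zero, hfZ]

theorem map_natCast_smul (hf : IsBAutomorphism S f) (hconv : ∀ C ∈ S, Convex ℝ C)
    (hsmul : ∀ r : ℝ, ∀ C ∈ S, r • C ∈ S) (hC : C ∈ S) {n : ℕ} (hn : 0 < n) :
    f ((n : ℝ) • C) = (n : ℝ) • f C := by
  induction n, hn using Nat.le_induction with
  | base => simp only [Nat.cast_one, one_smul]
  | succ n _ ih =>
    have hfC : Convex ℝ (f C) := hconv _ (hf.bijOn.mapsTo hC)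
    push_cast
    rw [(hconv C hC).add_smul n.cast_nonneg zero_le_one, one_smul, hf.map_add _ (hsmul _ _ hC) _ hC,
      ih, hfC.add_smul n.cast_nonneg zero_le_one, one_smul]

theorem map_ratCast_smul (hf : IsBAutomorphism S f) (hconv : ∀ C ∈ S, Convex ℝ C)
    (hsmul : ∀ r : ℝ, ∀ C ∈ S, r • C ∈ S) (hC : C ∈ S) {q : ℚ} (hq : 0 < q) :
    f ((q : ℝ) • C) = (q : ℝ) • f C := by
  obtain ⟨m, hm⟩ := Int.eq_ofNat_of_zero_le (Rat.num_pos.mpr hq).le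
  have hm0 : 0 < m := by have := Rat.num_pos.mpr hq; omega
  have hden : (q.den : ℝ) * q = m := by
    rw [Rat.cast_def, hm, mul_div_cancel₀ _ (by positivity)]
    rfl
  apply (MulAction.injective₀ (by positivity : (q.den : ℝ) ≠ 0)).image_injective
  change (q.den : ℝ) • f ((q : ℝ) • C) = (q.den : ℝ) • ((q : ℝ) • f C)
  rw [← hf.map_natCast_smul hconv hsmul (hsmul _ _ hC) q.den_pos, smul_smul, smul_smul, hden,
    hf.map_natCast_smul hconv hsmul hC hm0]

theorem map_smul_subset (hf : IsBAutomorphism S f) (hconv : ∀ C ∈ S, Convex ℝ C)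
    (hcpt : ∀ C ∈ S, IsCompact C) (hzero_mem : ∀ C ∈ S, C.Nonempty → (0 : ℂ) ∈ C)
    (hsmul : ∀ r : ℝ, ∀ C ∈ S, r • C ∈ S) (hC : C ∈ S) {r : ℝ} (hr : 0 < r) :
    f (r • C) ⊆ r • f C := by
  intro x hx
  have hclosed : IsClosed {t : ℝ | t • x ∈ f C} :=
    (hcpt _ (hf.bijOn.mapsTo hC)).isClosed.preimage (continuous_id.smul continuous_const)
  -- For rational `0 < p < r⁻¹`, `x ∈ f (r • C) ⊆ f (p⁻¹ • C) = p⁻¹ • f C`.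
  have hinv : r⁻¹ ∈ {t : ℝ | t • x ∈ f C} := by
    refine mem_of_forall_ratCast_mem_Ioo hclosed (inv_pos.mpr hr) fun p ⟨hp0, hpr⟩ => ?_
    have hp : 0 < p⁻¹ := inv_pos.mpr (by exact_mod_cast hp0)
    have hrp : r ≤ ((p⁻¹ : ℚ) : ℝ) := by
      rw [Rat.cast_inv]; exact (le_inv_comm₀ hp0 hr).mp hpr.le
    have hmono := hf.monotoneOn hconv (hsmul _ _ hC) (hsmul _ _ hC)
      ((hconv C hC).smul_subset_smul_of_le (hzero_mem C hC) hr.le hrp)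
    obtain ⟨y, hy, rfl⟩ := (hf.map_ratCast_smul hconv hsmul hC hp ▸ hmono) hx
    rwa [Set.mem_ofPred_eq, smul_smul, Rat.cast_inv, mul_inv_cancel₀ hp0.ne', one_smul]
  exact ⟨r⁻¹ • x, hinv, smul_inv_smul₀ hr.ne' x⟩

theorem smul_subset_map_smul (hf : IsBAutomorphism S f) (hconv : ∀ C ∈ S, Convex ℝ C)
    (hcpt : ∀ C ∈ S, IsCompact C) (hzero_mem : ∀ C ∈ S, C.Nonempty → (0 : ℂ) ∈ C)
    (hsmul : ∀ r : ℝ, ∀ C ∈ S, r • C ∈ S) (hC : C ∈ S) {r : ℝ} (hr : 0 < r) :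
    r • f C ⊆ f (r • C) := by
  rintro _ ⟨x, hx, rfl⟩
  have hclosed : IsClosed {t : ℝ | t • x ∈ f (r • C)} :=
    (hcpt _ (hf.bijOn.mapsTo (hsmul r C hC))).isClosed.preimage
      (continuous_id.smul continuous_const)
  -- For rational `0 < q < r`, `q • x ∈ q • f C = f (q • C) ⊆ f (r • C)`.
  refine mem_of_forall_ratCast_mem_Ioo hclosed hr fun q ⟨hq0, hqr⟩ => ?_
  have hmono := hf.monotoneOn hconv (hsmul _ _ hC) (hsmul _ _ hC)
    ((hconv C hC).smul_subset_smul_of_le (hzero_mem C hC) hq0.le hqr.le)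
  exact hmono (hf.map_ratCast_smul hconv hsmul hC (by exact_mod_cast hq0) ▸ ⟨x, hx, rfl⟩)

theorem map_real_smul (hf : IsBAutomorphism S f) (hempty : ∅ ∈ S) (hzero : {0} ∈ S)
    (hconv : ∀ C ∈ S, Convex ℝ C) (hcpt : ∀ C ∈ S, IsCompact C)
    (hzero_mem : ∀ C ∈ S, C.Nonempty → (0 : ℂ) ∈ C) (hsmul : ∀ r : ℝ, ∀ C ∈ S, r • C ∈ S)
    (hC : C ∈ S) {r : ℝ} (hr : 0 ≤ r) : f (r • C) = r • f C := by
  rcases hr.eq_or_lt with rfl | hr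
  · exact hf.map_zero_smul hempty hzero hcpt hC
  exact (hf.map_smul_subset hconv hcpt hzero_mem hsmul hC hr).antisymm
    (hf.smul_subset_map_smul hconv hcpt hzero_mem hsmul hC hr)

end IsBAutomorphism

section CKC

variable {D : Set ℂ}

theorem isPolytope_of_mem_CKC (hD : IsPolytope D) : ∀ C ∈ CKC D, IsPolytope C :=
  isPolytope_of_mem_genSemiring fun _ ⟨h, hC⟩ => hC ▸ hD.smul h

theorem zero_mem_of_mem_CKC (hD : D.Nonempty → (0 : ℂ) ∈ D) :
    ∀ C ∈ CKC D, C.Nonempty → (0 : ℂ) ∈ C :=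
  zero_mem_of_mem_genSemiring <| by
    rintro _ ⟨h, rfl⟩ hne
    exact ⟨0, hD (Set.smul_set_nonempty.mp hne), smul_zero h⟩

theorem smul_mem_CKC (a : ℂ) : ∀ C ∈ CKC D, a • C ∈ CKC D :=
  smul_mem_genSemiring (by rintro a _ ⟨h, rfl⟩; exact ⟨a * h, smul_smul a h D⟩) a

end CKC

theorem stmt12_general (D : Set ℂ)
    (hDpoly : ∃ S : Finset ℂ, D = convexHull ℝ (↑S : Set ℂ))
    (hDsymm : -D = D)
    (f : Set ℂ → Set ℂ)
    (hfbij : Set.BijOn f (CKC D) (CKC D))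
    (hfconv : ∀ A ∈ CKC D, ∀ B ∈ CKC D,
      f (convexHull ℝ (A ∪ B)) = convexHull ℝ (f A ∪ f B))
    (hfadd : ∀ A ∈ CKC D, ∀ B ∈ CKC D, f (A + B) = f A + f B)
    (hfcirc : ∀ μ : ℂ, ‖μ‖ = 1 → ∀ A ∈ CKC D, f (μ • A) = μ • f A) :
    f ∅ = ∅ ∧ f {0} = {0} ∧ ∀ (lam : ℂ), ∀ C ∈ CKC D, f (lam • C) = lam • f C := by
  have hD : IsPolytope D := by
    obtain ⟨s, rfl⟩ := hDpoly
    exact ⟨s, s.finite_toSet, rfl⟩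
  have hconv (C) (hC : C ∈ CKC D) : Convex ℝ C := (isPolytope_of_mem_CKC hD C hC).convex
  have hcpt (C) (hC : C ∈ CKC D) : IsCompact C := (isPolytope_of_mem_CKC hD C hC).isCompact
  have hzero_mem := zero_mem_of_mem_CKC (hD.convex.zero_mem_of_neg_eq hDsymm)
  have hsmul (r : ℝ) (C) (hC : C ∈ CKC D) : r • C ∈ CKC D :=
    Complex.ofReal_smul_set r C ▸ smul_mem_CKC _ C hC
  have hf : IsBAutomorphism (CKC D) f := ⟨hfbij, hfconv, hfadd⟩
  obtain ⟨hfE, hfZ⟩ := hf.map_empty_and_map_zero empty_mem_genSemiring zero_mem_genSemiring hcpt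
  refine ⟨hfE, hfZ, fun lam C hC => ?_⟩
  set u := Complex.exp (lam.arg * Complex.I)
  have hlam : (‖lam‖ : ℂ) * u = lam := Complex.norm_mul_exp_arg_mul_I lam
  calc f (lam • C) = f (‖lam‖ • u • C) := by rw [← Complex.ofReal_smul_set, smul_smul, hlam]
    _ = ‖lam‖ • u • f C := by
      rw [hf.map_real_smul empty_mem_genSemiring zero_mem_genSemiring hconv hcpt hzero_mem hsmul
        (smul_mem_CKC u C hC) (norm_nonneg lam), hfcirc u (Complex.norm_exp_ofReal_mul_I _) C hC]
    _ = lam • f C := by rw [← Complex.ofReal_smul_set, smul_smul, hlam]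

/-- a direct `𝔹`-automorphism `f` of the semiring `𝒞_{K,ℂ}` (a bijection
of `𝒞_{K,ℂ}` preserving `Conv(• ∪ •)`, the Minkowski sum, and commuting with the
action of `𝕊¹`) fixes `∅` and `{0}`, and commutes with all complex homotheties:
`f(λC) = λ·f(C)` for all `λ ∈ ℂ` and `C ∈ 𝒞_{K,ℂ}`. -/
theorem stmt12 (D : Set ℂ)
    (hDpoly : ∃ S : Finset ℂ, D = convexHull ℝ (↑S : Set ℂ))
    (hDint : (interior D).Nonempty) (hDsymm : -D = D)
    (f : Set ℂ → Set ℂ)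
    (hfbij : Set.BijOn f (CKC D) (CKC D))
    (hfconv : ∀ A ∈ CKC D, ∀ B ∈ CKC D,
      f (convexHull ℝ (A ∪ B)) = convexHull ℝ (f A ∪ f B))
    (hfadd : ∀ A ∈ CKC D, ∀ B ∈ CKC D, f (A + B) = f A + f B)
    (hfcirc : ∀ μ : ℂ, ‖μ‖ = 1 → ∀ A ∈ CKC D, f (μ • A) = μ • f A) :
    f ∅ = ∅ ∧ f {0} = {0} ∧ ∀ (lam : ℂ), ∀ C ∈ CKC D, f (lam • C) = lam • f C :=
  stmt12_general D hDpoly hDsymm f hfbij hfconv hfadd hfcirc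
end

section
/- Let $\mathcal{C}_{\mathbb{Z}[\imath]}$ be the semiring of $\imath$-symmetric convex polygons with center 0, nonempty interior and vertices in $\mathbb{Z}[\imath]$ (together with $\emptyset$ and $\{0\}$), with operations convex hull of union and Minkowski sum. The map $\Phi$ sending a polygon $C$ with vertex set $\Sigma_C$ to the function $[1,\imath] \ni x + \imath y \mapsto \max_{(a,b) \in \Sigma_C} (ax + by) \in \mathbb{R}_{\max}$ (restricted support function), with $\Phi(\emptyset) \equiv -\infty$, is a semiring isomorphism from $(\mathcal{C}_{\mathbb{Z}[\imath]}, \mathrm{Conv}(\bullet \cup \bullet), +)$ onto $(\mathcal{F}_{\mathbb{Z}[\imath]}, \max, +)$. -/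
open Pointwise

/-- The segment `[1, i] = {1 - t + i t : t ∈ [0,1]}` in `ℂ`. -/
def Seg : Set ℂ := {z : ℂ | ∃ t : ℝ, 0 ≤ t ∧ t ≤ 1 ∧ z = 1 - t + t * Complex.I}

/-- The (restricted) support function of a subset `C ⊆ ℂ`: the function on the segment
`[1, i]` given by `x + i y ↦ sup_{(a,b) ∈ C} (a x + b y)`, with values in
`ℝ ∪ {±∞}`; for a convex polygon this is `max_{(a,b) ∈ Σ_C} (a x + b y)` over the vertex
set `Σ_C`, and `Φ ∅ ≡ -∞`. -/
noncomputable def suppFn (C : Set ℂ) : Seg → EReal :=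
  fun z => ⨆ w ∈ C, (((z : ℂ).re * w.re + (z : ℂ).im * w.im : ℝ) : EReal)

/-- The semiring `𝒞_{ℤ[i]}` of `i`-symmetric convex polygons with center `0`, nonempty
interior and vertices in `ℤ[i]`, together with `∅` and `{0}`. -/
def CZi : Set (Set ℂ) :=
  {C : Set ℂ | C = ∅ ∨ C = {0} ∨
    ((∃ S : Finset ℂ,
        (↑S : Set ℂ) ⊆ {z : ℂ | ∃ a b : ℤ, z = (a : ℂ) + (b : ℂ) * Complex.I} ∧
        C = convexHull ℝ ↑S) ∧
      (interior C).Nonempty ∧ C = -C ∧ Complex.I • C = C)}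

/-!
`suppFn C` is the support function `h_C(v) = sup_{w ∈ C} ⟪v, w⟫` restricted to `[1, i]`.
Support functions turn convex hulls of unions into maxima, and Minkowski sums of compact sets
into sums (the sum of two maximizers is a maximizer). For injectivity, `i • C = C` makes `h_C`
invariant under rotation by `i`, and every nonzero vector is a positive multiple of a rotation
of a point of `[1, i]`; so `h_A = h_B` on `[1, i]` forces agreement along every ray, and
Hahn–Banach separation recovers a closed convex set from its support function along rays.
-/

open scoped RealInnerProductSpace

section SupportFunction

variable {E : Type*} [NormedAddCommGroup E] [InnerProductSpace ℝ E]

noncomputable def supportFun (C : Set E) (v : E) : EReal := ⨆ w ∈ C, (⟪v, w⟫ : EReal)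

theorem le_supportFun {C : Set E} {w : E} (hw : w ∈ C) (v : E) :
    (⟪v, w⟫ : EReal) ≤ supportFun C v :=
  le_iSup₂_of_le w hw le_rfl

theorem supportFun_le_coe_iff {C : Set E} {v : E} {u : ℝ} :
    supportFun C v ≤ u ↔ ∀ w ∈ C, ⟪v, w⟫ ≤ u := by
  simp only [supportFun, iSup₂_le_iff, EReal.coe_le_coe_iff]

@[simp]
theorem supportFun_empty (v : E) : supportFun ∅ v = ⊥ := by
  simp [supportFun]

theorem supportFun_union (A B : Set E) (v : E) :
    supportFun (A ∪ B) v = max (supportFun A v) (supportFun B v) :=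
  iSup_union

theorem supportFun_convexHull (S : Set E) : supportFun (convexHull ℝ S) = supportFun S := by
  funext v
  refine le_antisymm (iSup₂_le fun w hw => ?_) (biSup_mono fun _ hw => subset_convexHull ℝ S hw)
  obtain ⟨y, hy, hwy⟩ := ((innerₛₗ ℝ v).convexOn convex_univ).exists_ge_of_mem_convexHull
    (Set.subset_univ S) hw
  exact (EReal.coe_le_coe_iff.mpr hwy).trans (le_supportFun hy v)

theorem supportFun_eq_of_isMaxOn {C : Set E} {v a : E} (ha : a ∈ C)
    (hmax : IsMaxOn (inner ℝ v) C a) : supportFun C v = ⟪v, a⟫ :=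
  le_antisymm (supportFun_le_coe_iff.mpr fun _ hw => hmax hw) (le_supportFun ha v)

theorem supportFun_add {A B : Set E} (hA : IsCompact A) (hB : IsCompact B) (v : E) :
    supportFun (A + B) v = supportFun A v + supportFun B v := by
  rcases A.eq_empty_or_nonempty with rfl | hAne
  · simp
  rcases B.eq_empty_or_nonempty with rfl | hBne
  · simp
  have hcont : ContinuousOn (inner ℝ v) Set.univ := (innerSL ℝ v).continuous.continuousOn
  obtain ⟨a, ha, hamax⟩ := hA.exists_isMaxOn hAne (hcont.mono (Set.subset_univ A))
  obtain ⟨b, hb, hbmax⟩ := hB.exists_isMaxOn hBne (hcont.mono (Set.subset_univ B))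
  have habmax : IsMaxOn (inner ℝ v) (A + B) (a + b) := by
    rintro _ ⟨x, hx, y, hy, rfl⟩
    simpa only [Set.mem_ofPred_eq, inner_add_right] using add_le_add (hamax hx) (hbmax hy)
  rw [supportFun_eq_of_isMaxOn (Set.add_mem_add ha hb) habmax, supportFun_eq_of_isMaxOn ha hamax,
    supportFun_eq_of_isMaxOn hb hbmax, inner_add_right, EReal.coe_add]

/-- Phrased along rays to avoid positive homogeneity of `supportFun`, which is awkward in
`EReal`. -/
theorem subset_of_supportFun_le [CompleteSpace E] {A B : Set E} (hBconv : Convex ℝ B)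
    (hBclosed : IsClosed B) (hBne : B.Nonempty)
    (hle : ∀ v ≠ 0, ∃ c : ℝ, 0 < c ∧ supportFun A (c • v) ≤ supportFun B (c • v)) : A ⊆ B := by
  intro x hxA
  by_contra hxB
  obtain ⟨f, u, hfB, hfx⟩ := geometric_hahn_banach_closed_point hBconv hBclosed hxB
  set v := (InnerProductSpace.toDual ℝ E).symm f
  have hv : ∀ w, ⟪v, w⟫ = f w := fun w => InnerProductSpace.toDual_symm_apply
  have hv0 : v ≠ 0 := by
    intro h0
    obtain ⟨b, hb⟩ := hBne
    have hbu := hfB b hb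
    rw [← hv, h0, inner_zero_left] at hbu
    rw [← hv, h0, inner_zero_left] at hfx
    linarith
  obtain ⟨c, hc, hcle⟩ := hle v hv0
  have hBu : supportFun B (c • v) ≤ (c * u : ℝ) := supportFun_le_coe_iff.mpr fun w hw => by
    rw [real_inner_smul_left, hv]
    exact mul_le_mul_of_nonneg_left (hfB w hw).le hc.le
  have hux : c * u < ⟪c • v, x⟫ := by
    rw [real_inner_smul_left, hv]
    exact mul_lt_mul_of_pos_left hfx hc
  exact (EReal.coe_lt_coe_iff.mpr hux).not_ge <|
    (le_supportFun hxA _).trans (hcle.trans hBu)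

end SupportFunction

section Complex

open Complex

theorem suppFn_apply (C : Set ℂ) (z : Seg) : suppFn C z = supportFun C (z : ℂ) := by
  simp only [suppFn, supportFun, Complex.inner, mul_re, conj_re, conj_im]
  congr! 4
  ring

theorem mem_Seg_iff {z : ℂ} : z ∈ Seg ↔ 0 ≤ z.re ∧ 0 ≤ z.im ∧ z.re + z.im = 1 := by
  constructor
  · rintro ⟨t, ht0, ht1, rfl⟩
    simpa using ⟨ht1, ht0⟩
  · rintro ⟨hre, him, hsum⟩
    exact ⟨z.im, him, by linarith, Complex.ext (by simpa using eq_sub_of_add_eq hsum) (by simp)⟩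

theorem one_mem_Seg : (1 : ℂ) ∈ Seg := mem_Seg_iff.mpr (by norm_num)

theorem exists_I_pow_mul_re_nonneg_im_nonneg (v : ℂ) :
    ∃ k : ℕ, 0 ≤ (I ^ k * v).re ∧ 0 ≤ (I ^ k * v).im := by
  rcases le_or_gt 0 v.re with hre | hre <;> rcases le_or_gt 0 v.im with him | him
  · exact ⟨0, by simpa using ⟨hre, him⟩⟩
  · exact ⟨1, by simp [hre, him.le]⟩
  · exact ⟨3, by simp [pow_succ, hre.le, him]⟩
  · exact ⟨2, by simp [pow_succ, hre.le, him.le]⟩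

theorem exists_pos_smul_I_pow_mul_mem_Seg {v : ℂ} (hv : v ≠ 0) :
    ∃ c : ℝ, 0 < c ∧ ∃ k : ℕ, I ^ k * (c • v) ∈ Seg := by
  obtain ⟨k, hre, him⟩ := exists_I_pow_mul_re_nonneg_im_nonneg v
  set w := I ^ k * v
  have hw : 0 < w.re + w.im := by
    refine lt_of_le_of_ne (by positivity) fun h => ?_
    have hw0 : w = 0 := Complex.ext (by rw [zero_re]; linarith) (by rw [zero_im]; linarith)
    exact hv ((mul_eq_zero.mp hw0).resolve_left (pow_ne_zero k I_ne_zero))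
  refine ⟨(w.re + w.im)⁻¹, inv_pos.mpr hw, k, ?_⟩
  rw [mul_smul_comm]
  change (w.re + w.im)⁻¹ • w ∈ Seg
  rw [mem_Seg_iff]
  simp only [smul_re, smul_im, smul_eq_mul]
  refine ⟨by positivity, by positivity, ?_⟩
  field_simp

theorem supportFun_I_mul {C : Set ℂ} (hC : I • C = C) (v : ℂ) :
    supportFun C (I * v) = supportFun C v := by
  have hIinner : ∀ w, ⟪I * v, I * w⟫ = ⟪v, w⟫ := fun w => by
    simp only [Complex.inner, mul_re, mul_im, conj_re, conj_im, I_re, I_im]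
    ring
  conv_lhs => rw [← hC, supportFun, ← Set.image_smul, iSup_image]
  simp only [smul_eq_mul, hIinner, supportFun]

theorem supportFun_I_pow_mul {C : Set ℂ} (hC : I • C = C) (k : ℕ) (v : ℂ) :
    supportFun C (I ^ k * v) = supportFun C v := by
  induction k with
  | zero => simp
  | succ k ih => rw [pow_succ', mul_assoc, supportFun_I_mul hC, ih]

theorem subset_of_suppFn_le {A B : Set ℂ} (hBconv : Convex ℝ B) (hBclosed : IsClosed B)
    (hA : I • A = A) (hB : I • B = B) (hle : ∀ z, suppFn A z ≤ suppFn B z) : A ⊆ B := by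
  rcases B.eq_empty_or_nonempty with rfl | hBne
  · intro x hx
    have h1 := hle ⟨1, one_mem_Seg⟩
    rw [suppFn_apply, suppFn_apply, supportFun_empty] at h1
    simpa using (le_supportFun hx 1).trans h1
  refine subset_of_supportFun_le hBconv hBclosed hBne fun v hv => ?_
  obtain ⟨c, hc, k, hz⟩ := exists_pos_smul_I_pow_mul_mem_Seg hv
  refine ⟨c, hc, ?_⟩
  rw [← supportFun_I_pow_mul hA k, ← supportFun_I_pow_mul hB k]
  simpa only [suppFn_apply] using hle ⟨_, hz⟩

theorem isCompact_convex_I_smul_of_mem_CZi {C : Set ℂ} (hC : C ∈ CZi) :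
    IsCompact C ∧ Convex ℝ C ∧ I • C = C := by
  rcases hC with rfl | rfl | ⟨⟨S, -, rfl⟩, -, -, hI⟩
  · simp [convex_empty]
  · simp [convex_singleton]
  · exact ⟨S.finite_toSet.isCompact_convexHull ℝ, convex_convexHull ℝ _, hI⟩

end Complex

/-- the map `Φ` sending a polygon to its restricted support function is a
semiring isomorphism from `(𝒞_{ℤ[i]}, Conv(• ∪ •), +)` onto
`(𝓕_{ℤ[i]}, max, +) = (Φ''(𝒞_{ℤ[i]}), max, +)`. -/
theorem stmt16 :
    Set.BijOn suppFn CZi (suppFn '' CZi) ∧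
    (∀ A ∈ CZi, ∀ B ∈ CZi,
      suppFn (convexHull ℝ (A ∪ B)) = fun z => max (suppFn A z) (suppFn B z)) ∧
    (∀ A ∈ CZi, ∀ B ∈ CZi,
      suppFn (A + B) = fun z => suppFn A z + suppFn B z) := by
  refine ⟨⟨Set.mapsTo_image _ _, fun A hA B hB hAB => ?_, Set.surjOn_image _ _⟩,
    fun A _ B _ => ?_, fun A hA B hB => ?_⟩
  · obtain ⟨hAcpt, hAconv, hAI⟩ := isCompact_convex_I_smul_of_mem_CZi hA
    obtain ⟨hBcpt, hBconv, hBI⟩ := isCompact_convex_I_smul_of_mem_CZi hB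
    exact (subset_of_suppFn_le hBconv hBcpt.isClosed hAI hBI (hAB ▸ fun _ => le_rfl)).antisymm
      (subset_of_suppFn_le hAconv hAcpt.isClosed hBI hAI (hAB ▸ fun _ => le_rfl))
  · funext z
    simp only [suppFn_apply, supportFun_convexHull, supportFun_union]
  · funext z
    simp only [suppFn_apply]
    exact supportFun_add (isCompact_convex_I_smul_of_mem_CZi hA).1
      (isCompact_convex_I_smul_of_mem_CZi hB).1 _
end

section
/- Let $M, N$ be idempotent commutative monoids ($\mathbb{B}$-modules) which are also idempotent semirings with second operation $+$. On the tensor product $M \otimes_{\mathbb{B}} N$ of $\mathbb{B}$-modules, the operation defined on elementary tensors by $(a \otimes b) + (a' \otimes b') := (a + a') \otimes (b + b')$ extends to a well-defined associative, commutative operation making $M \otimes_{\mathbb{B}} N$ an idempotent semiring. -/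
universe u

/-- Evaluation of a finite formal sum `∑ eᵢ ⊗ fᵢ` (a multiset of pairs) under a map
`ψ : M → N → P`. -/
def evalSum {M N P : Type u} [AddCommMonoid P] (ψ : M → N → P)
    (s : Multiset (M × N)) : P :=
  (s.map fun p => ψ p.1 p.2).sum

/-- Two finite formal sums represent the same element of the tensor product
`M ⊗_𝔹 N` iff every `𝔹`-bilinear map into any `𝔹`-module (idempotent commutative
monoid) takes the same value on them. -/
def tensorRel (M N : Type u) [CommSemiring M] [CommSemiring N]
    (s t : Multiset (M × N)) : Prop :=
  ∀ (P : Type u) [AddCommMonoid P], (∀ x : P, x + x = x) →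
    ∀ ψ : M → N → P,
      (∀ a a' b, ψ (a + a') b = ψ a b + ψ a' b) →
      (∀ a b b', ψ a (b + b') = ψ a b + ψ a b') →
      evalSum ψ s = evalSum ψ t

/-- The product of two formal sums, defined on elementary tensors by
`(a ⊗ b) · (a' ⊗ b') = (a * a') ⊗ (b * b')` (the operation written `+` in the paper). -/
def tensorMul {M N : Type u} [CommSemiring M] [CommSemiring N]
    (s t : Multiset (M × N)) : Multiset (M × N) :=
  s.bind fun p => t.map fun q => (p.1 * q.1, p.2 * q.2)

/-! The product is associative, commutative, unital and distributive already on formal sums;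
the only real point is that it respects `tensorRel`. For that, fix a bilinear `ψ`: the
evaluation of `s · t` is the evaluation of `s` under `(a, b) ↦ ∑ ψ (a * aᵢ) (b * bᵢ)`
(summed over `t`), and this map is again bilinear, so `s ~ s'` may be applied to it. -/

section evalSum

variable {M N P : Type u} [AddCommMonoid P]

lemma evalSum_add (ψ : M → N → P) (s t : Multiset (M × N)) :
    evalSum ψ (s + t) = evalSum ψ s + evalSum ψ t := by
  simp only [evalSum, Multiset.map_add, Multiset.sum_add]

lemma evalSum_add_fun (φ χ : M → N → P) (s : Multiset (M × N)) :
    evalSum (fun a b => φ a b + χ a b) s = evalSum φ s + evalSum χ s := by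
  simp only [evalSum, Multiset.sum_map_add]

end evalSum

section tensorMul

variable {M N : Type u} [CommSemiring M] [CommSemiring N]

lemma tensorMul_singleton (a a' : M) (b b' : N) :
    tensorMul ({(a, b)} : Multiset (M × N)) {(a', b')} = {(a * a', b * b')} := by
  simp [tensorMul]

lemma tensorMul_comm (s t : Multiset (M × N)) : tensorMul s t = tensorMul t s := by
  rw [tensorMul, tensorMul, Multiset.bind_map_comm]
  exact Multiset.bind_congr fun _ _ => Multiset.map_congr rfl fun p _ => by
    rw [mul_comm p.1, mul_comm p.2]

lemma tensorMul_assoc (s t u : Multiset (M × N)) :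
    tensorMul (tensorMul s t) u = tensorMul s (tensorMul t u) := by
  simp only [tensorMul, Multiset.bind_assoc, Multiset.map_bind, Multiset.bind_map,
    Multiset.map_map, Function.comp_def, mul_assoc]

lemma tensorMul_one (s : Multiset (M × N)) : tensorMul s {(1, 1)} = s := by
  simpa [tensorMul] using Multiset.bind_singleton s id

lemma tensorMul_add (s t u : Multiset (M × N)) :
    tensorMul s (t + u) = tensorMul s t + tensorMul s u := by
  simp only [tensorMul, Multiset.map_add]
  exact Multiset.bind_add ..

lemma evalSum_tensorMul {P : Type u} [AddCommMonoid P] (ψ : M → N → P)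
    (s t : Multiset (M × N)) :
    evalSum ψ (tensorMul s t)
      = evalSum (fun a b => evalSum (fun a' b' => ψ (a * a') (b * b')) t) s := by
  simp [evalSum, tensorMul, Multiset.map_bind, Multiset.sum_bind, Multiset.map_map,
    Function.comp]

end tensorMul

namespace tensorRel

variable {M N : Type u} [CommSemiring M] [CommSemiring N]

lemma of_eq {s t : Multiset (M × N)} (h : s = t) : tensorRel M N s t := by
  intro P _ _ ψ _ _
  rw [h]

lemma trans {s t u : Multiset (M × N)} (hst : tensorRel M N s t)
    (htu : tensorRel M N t u) : tensorRel M N s u :=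
  fun P _ hP ψ hl hr => (hst P hP ψ hl hr).trans (htu P hP ψ hl hr)

lemma add_self (s : Multiset (M × N)) : tensorRel M N (s + s) s := by
  intro P _ hP ψ _ _
  rw [evalSum_add]
  exact hP _

lemma tensorMul_left {s s' : Multiset (M × N)} (hs : tensorRel M N s s')
    (t : Multiset (M × N)) : tensorRel M N (tensorMul s t) (tensorMul s' t) := by
  intro P _ hP ψ hl hr
  rw [evalSum_tensorMul, evalSum_tensorMul]
  refine hs P hP _ (fun a a' b => ?_) (fun a b b' => ?_)
  · simp only [add_mul, hl, evalSum_add_fun]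
  · simp only [add_mul, hr, evalSum_add_fun]

lemma tensorMul_right (s : Multiset (M × N)) {t t' : Multiset (M × N)}
    (ht : tensorRel M N t t') : tensorRel M N (tensorMul s t) (tensorMul s t') := by
  rw [tensorMul_comm s t, tensorMul_comm s t']
  exact ht.tensorMul_left s

lemma tensorMul {s s' t t' : Multiset (M × N)} (hs : tensorRel M N s s')
    (ht : tensorRel M N t t') : tensorRel M N (tensorMul s t) (tensorMul s' t') :=
  (hs.tensorMul_left t).trans (tensorMul_right s' ht)

end tensorRel

theorem stmt19_general {M N : Type u} [CommSemiring M] [CommSemiring N] :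
    -- the operation on elementary tensors
    (∀ (a a' : M) (b b' : N),
      tensorMul ({(a, b)} : Multiset (M × N)) {(a', b')} = {(a * a', b * b')}) ∧
    -- well-definedness: compatibility with the tensor relation
    (∀ s s' t t' : Multiset (M × N), tensorRel M N s s' → tensorRel M N t t' →
      tensorRel M N (tensorMul s t) (tensorMul s' t')) ∧
    -- commutativity and associativity
    (∀ s t : Multiset (M × N), tensorRel M N (tensorMul s t) (tensorMul t s)) ∧
    (∀ s t u : Multiset (M × N),
      tensorRel M N (tensorMul (tensorMul s t) u) (tensorMul s (tensorMul t u))) ∧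
    -- neutral element `1 ⊗ 1`
    (∀ s : Multiset (M × N), tensorRel M N (tensorMul s {(1, 1)}) s) ∧
    -- distributivity over the idempotent addition `⊕` (multiset union)
    (∀ s t u : Multiset (M × N),
      tensorRel M N (tensorMul s (t + u)) (tensorMul s t + tensorMul s u)) ∧
    -- the addition of `M ⊗_𝔹 N` is idempotent
    (∀ s : Multiset (M × N), tensorRel M N (s + s) s) :=
  ⟨tensorMul_singleton,
    fun _ _ _ _ => tensorRel.tensorMul,
    fun s t => .of_eq (tensorMul_comm s t),
    fun s t u => .of_eq (tensorMul_assoc s t u),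
    fun s => .of_eq (tensorMul_one s),
    fun s t u => .of_eq (tensorMul_add s t u),
    tensorRel.add_self⟩

/-- for `M, N` idempotent commutative monoids (`𝔹`-modules) which are also
idempotent semirings (second operation `+` of the paper, written `*` here), the operation
`(a ⊗ b) + (a' ⊗ b') := (a + a') ⊗ (b + b')` extends to a well-defined associative,
commutative operation on `M ⊗_𝔹 N`, making it an idempotent semiring. -/
theorem stmt19 {M N : Type u} [CommSemiring M] [CommSemiring N]
    (hM : ∀ a : M, a + a = a) (hN : ∀ b : N, b + b = b) :
    -- the operation on elementary tensors
    (∀ (a a' : M) (b b' : N),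
      tensorMul ({(a, b)} : Multiset (M × N)) {(a', b')} = {(a * a', b * b')}) ∧
    -- well-definedness: compatibility with the tensor relation
    (∀ s s' t t' : Multiset (M × N), tensorRel M N s s' → tensorRel M N t t' →
      tensorRel M N (tensorMul s t) (tensorMul s' t')) ∧
    -- commutativity and associativity
    (∀ s t : Multiset (M × N), tensorRel M N (tensorMul s t) (tensorMul t s)) ∧
    (∀ s t u : Multiset (M × N),
      tensorRel M N (tensorMul (tensorMul s t) u) (tensorMul s (tensorMul t u))) ∧
    -- neutral element `1 ⊗ 1`
    (∀ s : Multiset (M × N), tensorRel M N (tensorMul s {(1, 1)}) s) ∧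
    -- distributivity over the idempotent addition `⊕` (multiset union)
    (∀ s t u : Multiset (M × N),
      tensorRel M N (tensorMul s (t + u)) (tensorMul s t + tensorMul s u)) ∧
    -- the addition of `M ⊗_𝔹 N` is idempotent
    (∀ s : Multiset (M × N), tensorRel M N (s + s) s) :=
  stmt19_general
end
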